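/- arXiv:math/0612360 — 5 statements merged into one kernel-verified Lean document; each statement's English description precedes it below -/
import Mathlib

section
/- Let G be a connected directed graph that is graded, i.e., there is a function r: V(G) → ℤ with r(v) = r(u) + 1 for every edge (u,v). Suppose G satisfies: for any vertex v and any two edges e, e' entering v, there exist a vertex w and two directed paths from w to v such that one contains e and the other contains e'. Then either G has a source (a vertex from which every inclusion-wise maximal directed path begins) or every maximal directed path in G is infinite in the backward direction. -/
/-- A (finite or infinite) directed path in a digraph with edge relation `E`,
indexed by an order-convex nonempty set of integers. -/
structure ZPath (V : Type*) (E : V → V → Prop) where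
  dom : Set ℤ
  nonempty : dom.Nonempty
  convex : ∀ ⦃a⦄, a ∈ dom → ∀ ⦃b⦄, b ∈ dom → ∀ ⦃x⦄, a ≤ x → x ≤ b → x ∈ dom
  fn : ℤ → V
  inj : ∀ ⦃a⦄, a ∈ dom → ∀ ⦃b⦄, b ∈ dom → fn a = fn b → a = b
  step : ∀ ⦃k⦄, k ∈ dom → (k + 1) ∈ dom → E (fn k) (fn (k + 1))

/-- A path is inclusion-wise maximal if it admits no proper extension. -/
def ZPath.IsMaximal {V : Type*} {E : V → V → Prop} (p : ZPath V E) : Prop :=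
  ∀ q : ZPath V E, p.dom ⊆ q.dom → (∀ k ∈ p.dom, q.fn k = p.fn k) → q.dom ⊆ p.dom

/-- The path begins at the vertex `s`. -/
def ZPath.BeginsAt {V : Type*} {E : V → V → Prop} (p : ZPath V E) (s : V) : Prop :=
  ∃ m ∈ p.dom, (∀ k ∈ p.dom, m ≤ k) ∧ p.fn m = s

/-- The path is infinite in the backward direction (has no first vertex). -/
def ZPath.BackInfinite {V : Type*} {E : V → V → Prop} (p : ZPath V E) : Prop :=
  ∀ m ∈ p.dom, ∃ k ∈ p.dom, k < m

/-- The path is a finite path from `w` to `v`. -/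
def ZPath.FromTo {V : Type*} {E : V → V → Prop} (p : ZPath V E) (w v : V) : Prop :=
  ∃ a ∈ p.dom, ∃ b ∈ p.dom, (∀ k ∈ p.dom, a ≤ k ∧ k ≤ b) ∧ p.fn a = w ∧ p.fn b = v

/-- The path contains the edge `(u, v)`. -/
def ZPath.ContainsEdge {V : Type*} {E : V → V → Prop} (p : ZPath V E) (u v : V) : Prop :=
  ∃ k, k ∈ p.dom ∧ (k + 1) ∈ p.dom ∧ p.fn k = u ∧ p.fn (k + 1) = v

section Aux

variable {V : Type*} {E : V → V → Prop}

lemma path_rank {r : V → ℤ} (hgrade : ∀ u v, E u v → r v = r u + 1)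
    (p : ZPath V E) {a k : ℤ} (ha : a ∈ p.dom) (h : a ≤ k) :
    k ∈ p.dom → r (p.fn k) = r (p.fn a) + (k - a) := by
  refine Int.le_induction (motive := fun k _ => k ∈ p.dom → r (p.fn k) = r (p.fn a) + (k - a))
    ?_ ?_ k h
  · intro _; simp
  · intro n hn ih hk
    have hnd : n ∈ p.dom := p.convex ha hk hn (by omega)
    have h1 := hgrade _ _ (p.step hnd hk)
    have h2 := ih hnd
    omega

lemma path_rtg (p : ZPath V E) {a k : ℤ} (ha : a ∈ p.dom) (h : a ≤ k) :
    k ∈ p.dom → Relation.ReflTransGen E (p.fn a) (p.fn k) := by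
  refine Int.le_induction (motive := fun k _ => k ∈ p.dom → Relation.ReflTransGen E (p.fn a) (p.fn k))
    ?_ ?_ k h
  · intro _; exact Relation.ReflTransGen.refl
  · intro n hn ih hk
    have hnd : n ∈ p.dom := p.convex ha hk hn (by omega)
    exact Relation.ReflTransGen.tail (ih hnd) (p.step hnd hk)

lemma rtg_rank_le {r : V → ℤ} (hgrade : ∀ u v, E u v → r v = r u + 1)
    {a b : V} (h : Relation.ReflTransGen E a b) : r a ≤ r b := by
  induction h with
  | refl => exact le_refl _
  | tail _ hedge ih => have := hgrade _ _ hedge; omega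

lemma fromTo_containsEdge_rtg (p : ZPath V E) {w v u : V}
    (h1 : p.FromTo w v) (h2 : p.ContainsEdge u v) : Relation.ReflTransGen E w u := by
  obtain ⟨a, hadom, bb, hbbdom, hbound, hw, hv⟩ := h1
  obtain ⟨k, hkdom, hk1dom, hu, hv'⟩ := h2
  have hkb : k + 1 = bb := p.inj hk1dom hbbdom (hv'.trans hv.symm)
  have hak : a ≤ k := (hbound k hkdom).1
  have := path_rtg p hadom hak hkdom
  rwa [hw, hu] at this

/-- Key lemma: if `s` has no in-edge, and `s` reaches `y`, then `s` reaches every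
vertex `x` that reaches `y`. Induction on `(r y - r s).toNat`. -/
lemma source_reaches {r : V → ℤ} (hgrade : ∀ u v, E u v → r v = r u + 1)
    (hstar : ∀ v u u', E u v → E u' v →
      ∃ (w : V) (p q : ZPath V E), p.FromTo w v ∧ q.FromTo w v ∧
        p.ContainsEdge u v ∧ q.ContainsEdge u' v)
    {s : V} (hs : ∀ x, ¬ E x s) :
    ∀ n : ℕ, ∀ y, Relation.ReflTransGen E s y → (r y - r s).toNat = n →
      ∀ x, Relation.ReflTransGen E x y → Relation.ReflTransGen E s x := by
  intro n
  induction n using Nat.strong_induction_on with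
  | _ n ih =>
    intro y hsy hn x hxy
    rcases Relation.ReflTransGen.cases_tail hxy with rfl | ⟨b, hxb, hby⟩
    · exact hsy
    rcases Relation.ReflTransGen.cases_tail hsy with rfl | ⟨c, hsc, hcy⟩
    · exact absurd hby (hs b)
    obtain ⟨w, p, q, hp, hq, hpe, hqe⟩ := hstar y b c hby hcy
    have hwb : Relation.ReflTransGen E w b := fromTo_containsEdge_rtg p hp hpe
    have hwc : Relation.ReflTransGen E w c := fromTo_containsEdge_rtg q hq hqe
    have hc1 : r y = r c + 1 := hgrade _ _ hcy
    have hb1 : r y = r b + 1 := hgrade _ _ hby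
    have hsc' : r s ≤ r c := rtg_rank_le hgrade hsc
    have hsw : Relation.ReflTransGen E s w :=
      ih _ (by omega) c hsc rfl w hwc
    have hsb : Relation.ReflTransGen E s b := hsw.trans hwb
    have hsb' : r s ≤ r b := rtg_rank_le hgrade hsb
    exact ih _ (by omega) b hsb rfl x hxb

/-- The first vertex of a maximal path (graded graph) has no in-edge. -/
lemma min_no_inedge {r : V → ℤ} (hgrade : ∀ u v, E u v → r v = r u + 1)
    (p : ZPath V E) (hmax : p.IsMaximal) {m : ℤ}
    (hm : m ∈ p.dom) (hmin : ∀ k ∈ p.dom, m ≤ k) (x : V) : ¬ E x (p.fn m) := by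
  classical
  intro hx
  set fn' : ℤ → V := fun k => if k = m - 1 then x else p.fn k with hfn'
  have hfn'_eq : ∀ k ∈ p.dom, fn' k = p.fn k := by
    intro k hk
    have := hmin k hk
    simp only [hfn']
    rw [if_neg (by omega)]
  have hrk : ∀ k ∈ p.dom, r (p.fn m) ≤ r (p.fn k) := by
    intro k hk
    have h0 := hmin k hk
    have := path_rank hgrade p hm h0 hk
    omega
  have hxr : r x + 1 = r (p.fn m) := by have := hgrade _ _ hx; omega
  set q : ZPath V E :=
    { dom := insert (m - 1) p.dom
      nonempty := ⟨m - 1, Set.mem_insert _ _⟩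
      convex := by
        intro a ha b hb y hay hyb
        rcases eq_or_ne y (m - 1) with rfl | hy
        · exact Set.mem_insert _ _
        · refine Set.mem_insert_iff.mpr (Or.inr ?_)
          rcases Set.mem_insert_iff.mp hb with rfl | hb'
          · rcases Set.mem_insert_iff.mp ha with rfl | ha'
            · omega
            · have := hmin a ha'; omega
          · rcases Set.mem_insert_iff.mp ha with rfl | ha'
            · have hyge : m ≤ y := by omega
              exact p.convex hm hb' hyge hyb
            · exact p.convex ha' hb' hay hyb
      fn := fn'
      inj := by
        intro a ha b hb hab
        rcases Set.mem_insert_iff.mp ha with rfl | ha' <;>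
          rcases Set.mem_insert_iff.mp hb with rfl | hb'
        · rfl
        · exfalso
          rw [hfn'_eq b hb'] at hab
          simp only [hfn', if_pos rfl] at hab
          have := hrk b hb'
          rw [← hab] at this
          omega
        · exfalso
          rw [hfn'_eq a ha'] at hab
          simp only [hfn', if_pos rfl] at hab
          have := hrk a ha'
          rw [hab] at this
          omega
        · rw [hfn'_eq a ha', hfn'_eq b hb'] at hab
          exact p.inj ha' hb' hab
      step := by
        intro k hk hk1
        rcases Set.mem_insert_iff.mp hk with rfl | hk'
        · have : m - 1 + 1 = m := by omega
          rw [this]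
          rw [hfn'_eq m hm]
          simpa only [hfn', if_pos rfl] using hx
        · have hk1' : k + 1 ∈ p.dom := by
            rcases Set.mem_insert_iff.mp hk1 with h | h
            · exfalso; have := hmin k hk'; omega
            · exact h
          rw [hfn'_eq k hk', hfn'_eq _ hk1']
          exact p.step hk' hk1' }
  have hsub : q.dom ⊆ p.dom :=
    hmax q (Set.subset_insert _ _) (fun k hk => hfn'_eq k hk)
  have : m - 1 ∈ p.dom := hsub (Set.mem_insert _ _)
  have := hmin _ this
  omega

lemma back_unbounded (q : ZPath V E) (hb : q.BackInfinite) {k₀ : ℤ}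
    (hk₀ : k₀ ∈ q.dom) : ∀ j : ℕ, ∃ k ∈ q.dom, k ≤ k₀ - j := by
  intro j
  induction j with
  | zero => exact ⟨k₀, hk₀, by omega⟩
  | succ j ih =>
    obtain ⟨k, hk, hkle⟩ := ih
    obtain ⟨k', hk', hk'lt⟩ := hb k hk
    exact ⟨k', hk', by push_cast; omega⟩

end Aux

/-- Let G be a connected graded digraph such that for any vertex v and any two
edges e, e' entering v there are two paths from a common vertex w to v, one
containing e and the other containing e'.  Then either G has a source (a vertex
at which every maximal path begins) or every maximal path is infinite backwards. -/
theorem stmt0 {V : Type*} (E : V → V → Prop)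
    (hconn : ∀ x y : V, Relation.ReflTransGen (fun a b => E a b ∨ E b a) x y)
    (r : V → ℤ) (hgrade : ∀ u v, E u v → r v = r u + 1)
    (hstar : ∀ v u u', E u v → E u' v →
      ∃ (w : V) (p q : ZPath V E), p.FromTo w v ∧ q.FromTo w v ∧
        p.ContainsEdge u v ∧ q.ContainsEdge u' v) :
    (∃ s : V, ∀ p : ZPath V E, p.IsMaximal → p.BeginsAt s) ∨
    (∀ p : ZPath V E, p.IsMaximal → p.BackInfinite) := by
  by_cases hall : ∀ p : ZPath V E, p.IsMaximal → p.BackInfinite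
  · exact Or.inr hall
  · left
    push_neg at hall
    obtain ⟨p, hpmax, hpnb⟩ := hall
    rw [ZPath.BackInfinite] at hpnb
    push_neg at hpnb
    obtain ⟨m, hm, hmin⟩ := hpnb
    set s := p.fn m with hs
    have hnoin : ∀ x, ¬ E x s := min_no_inedge hgrade p hpmax hm hmin
    have hreach : ∀ v, Relation.ReflTransGen E s v := by
      intro v
      have h := hconn s v
      induction h with
      | refl => exact Relation.ReflTransGen.refl
      | tail h1 hedge ih =>
        rcases hedge with h | h
        · exact ih.tail h
        · exact source_reaches hgrade hstar hnoin _ _ ih rfl _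
            (Relation.ReflTransGen.single h)
    have hrank : ∀ v, r s ≤ r v := fun v => rtg_rank_le hgrade (hreach v)
    refine ⟨s, ?_⟩
    intro q hqmax
    have hqnb : ¬ q.BackInfinite := by
      intro hb
      obtain ⟨k₀, hk₀⟩ := q.nonempty
      obtain ⟨k, hk, hkle⟩ := back_unbounded q hb hk₀ ((r (q.fn k₀) - r s + 1).toNat)
      have hkk : k ≤ k₀ := by omega
      have h1 := path_rank hgrade q hk hkk hk₀
      have h2 := hrank (q.fn k)
      have h3 := hrank (q.fn k₀)
      omega
    rw [ZPath.BackInfinite] at hqnb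
    push_neg at hqnb
    obtain ⟨m', hm', hmin'⟩ := hqnb
    have hnoin' : ∀ x, ¬ E x (q.fn m') := min_no_inedge hgrade q hqmax hm' hmin'
    rcases Relation.ReflTransGen.cases_tail (hreach (q.fn m')) with heq | ⟨b, _, hbe⟩
    · exact ⟨m', hm', hmin', heq⟩
    · exact absurd hbe (hnoin' b)
end

section
/- Fix c₁, c₂ ∈ ℤ≥0 and set c₁^Σ = c₁ + c₂, c₂^Σ = c₁. The map sending a quadruple (α₁, α₂, β₁, β₂) with 0 ≤ α₂ ≤ α₁ ≤ c₁, 0 ≤ β₁ ≤ β₂ ≤ c₂, and (α₂ = α₁ or β₁ = β₂) to the triple (x₁₁, x₂₁, x₂₂) = (α₁ + β₁, β₂ + c₁, α₂) is a bijection onto the set of Gelfand–Tsetlin patterns of size 2 bounded by (c₁^Σ, c₂^Σ), i.e., triples of integers with x₂₁ ≥ x₁₁ ≥ x₂₂ and c₁ + c₂ ≥ x₂₁ ≥ c₁ ≥ x₂₂ ≥ 0. -/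
/-- The map (α₁, α₂, β₁, β₂) ↦ (x₁₁, x₂₁, x₂₂) = (α₁ + β₁, β₂ + c₁, α₂) is a
bijection from the set of admissible quadruples onto the set of
Gelfand–Tsetlin patterns of size 2 bounded by (c₁ + c₂, c₁). -/
theorem stmt4 (c₁ c₂ : ℕ) :
    Set.BijOn (fun q : ℤ × ℤ × ℤ × ℤ => (q.1 + q.2.2.1, q.2.2.2 + (c₁ : ℤ), q.2.1))
      {q : ℤ × ℤ × ℤ × ℤ |
        0 ≤ q.2.1 ∧ q.2.1 ≤ q.1 ∧ q.1 ≤ (c₁ : ℤ) ∧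
        0 ≤ q.2.2.1 ∧ q.2.2.1 ≤ q.2.2.2 ∧ q.2.2.2 ≤ (c₂ : ℤ) ∧
        (q.2.1 = q.1 ∨ q.2.2.1 = q.2.2.2)}
      {x : ℤ × ℤ × ℤ |
        x.1 ≤ x.2.1 ∧ x.2.2 ≤ x.1 ∧
        x.2.1 ≤ (c₁ : ℤ) + (c₂ : ℤ) ∧ (c₁ : ℤ) ≤ x.2.1 ∧
        x.2.2 ≤ (c₁ : ℤ) ∧ 0 ≤ x.2.2} := by
  refine ⟨?_, ?_, ?_⟩
  · rintro ⟨a₁, a₂, b₁, b₂⟩ h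
    simp only [Set.mem_setOf_eq] at h ⊢
    omega
  · rintro ⟨a₁, a₂, b₁, b₂⟩ h ⟨a₁', a₂', b₁', b₂'⟩ h' heq
    simp only [Set.mem_setOf_eq] at h h'
    simp only [Prod.mk.injEq] at heq
    have : a₁ = a₁' ∧ a₂ = a₂' ∧ b₁ = b₁' ∧ b₂ = b₂' := by omega
    simp [Prod.ext_iff, this.1, this.2.1, this.2.2.1, this.2.2.2]
  · rintro ⟨x₁, x₂, x₃⟩ hx
    simp only [Set.mem_setOf_eq] at hx
    by_cases hc : x₁ - x₃ ≤ x₂ - c₁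
    · exact ⟨(x₃, x₃, x₁ - x₃, x₂ - c₁), by simp only [Set.mem_setOf_eq]; norm_num; omega,
        by simp only [Prod.mk.injEq]; norm_num⟩
    · exact ⟨(x₁ - x₂ + c₁, x₃, x₂ - c₁, x₂ - c₁), by simp only [Set.mem_setOf_eq]; norm_num; omega,
        by simp only [Prod.mk.injEq]; norm_num⟩
end

section
/- Let n ≥ 1, c ∈ ℤ≥0ⁿ, and let G be the supporting graph of the crossing model with base subgraphs G^k of sizes |V(G^k)| = k(n-k+1). In the crystal 𝒦(c) generated by the crossing model, the minimal function f₀ ≡ 0 is the unique source and the function f_c taking constant value c_k on each G^k is the unique sink, and every directed path from f₀ to f_c has length Σ_{k=1}^n c_k · k(n-k+1). -/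
/-- Nodes of the supporting graph of the crossing model: `(k, i, j)` with
`1 ≤ k ≤ n`, `1 ≤ j ≤ n - k + 1`, `j ≤ i ≤ j + k - 1` (node `v_i^k(j)`). -/
abbrev IsCNode (n k i j : ℤ) : Prop :=
  1 ≤ k ∧ k ≤ n ∧ 1 ≤ j ∧ j ≤ n - k + 1 ∧ j ≤ i ∧ i ≤ j + k - 1

/-- Extension of a weight function to the extended supporting graph:
on extra nodes lying left of `G^k` the value is `c k`, on extra nodes lying
right of `G^k` the value is `d k`. -/
def extF (n : ℤ) (c d : ℤ → ℤ) (f : ℤ → ℤ → ℤ → ℤ) (k i j : ℤ) : ℤ :=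
  if IsCNode n k i j then f k i j
  else if j ≤ 0 ∨ j + k ≤ i then c k else d k

/-- The switch condition at position `k` of the multinode `V_i(j)`:
the SE-edge of every preceding node is tight and the SW-edge of every
succeeding node is tight. -/
def SwitchAt (n : ℤ) (f : ℤ → ℤ → ℤ → ℤ) (i j k : ℤ) : Prop :=
  (∀ k', i - j + 1 ≤ k' → k' < k → IsCNode n k' (i + 1) (j + 1) →
      f k' (i + 1) (j + 1) = f k' i j) ∧
  (∀ k', k < k' → k' ≤ n - j + 1 → IsCNode n k' (i + 1) j →
      f k' (i + 1) j = f k' i j)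

/-- Feasible functions of the crossing model with upper bounds `c` and lower
bounds `d`: bounded, monotone along the edges, and satisfying the switch
condition in every multinode. -/
def Feasible (n : ℤ) (c d : ℤ → ℤ) (f : ℤ → ℤ → ℤ → ℤ) : Prop :=
  (∀ k i j, IsCNode n k i j → d k ≤ f k i j ∧ f k i j ≤ c k) ∧
  (∀ k i j, IsCNode n k i j → IsCNode n k (i - 1) j → f k (i - 1) j ≤ f k i j) ∧
  (∀ k i j, IsCNode n k i j → IsCNode n k (i + 1) (j + 1) →
      f k (i + 1) (j + 1) ≤ f k i j) ∧
  (∀ i j, 1 ≤ j → j ≤ i → i ≤ n →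
      ∃ k, i - j + 1 ≤ k ∧ k ≤ n - j + 1 ∧ SwitchAt n f i j k)

/-- Upper slack at a node: `∂f(e^NW(v))`. -/
def epsN (n : ℤ) (c d : ℤ → ℤ) (f : ℤ → ℤ → ℤ → ℤ) (k i j : ℤ) : ℤ :=
  extF n c d f k (i - 1) (j - 1) - extF n c d f k i j

/-- Lower slack at a node: `∂f(e^SE(v))`. -/
def delN (n : ℤ) (c d : ℤ → ℤ) (f : ℤ → ℤ → ℤ → ℤ) (k i j : ℤ) : ℤ :=
  extF n c d f k i j - extF n c d f k (i + 1) (j + 1)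

/-- Upper slack of the (extended) multinode `V_i(j)`. -/
noncomputable def epsM (n : ℤ) (c d : ℤ → ℤ) (f : ℤ → ℤ → ℤ → ℤ) (i j : ℤ) : ℤ :=
  ∑ k ∈ Finset.Icc (1 : ℤ) n, epsN n c d f k i j

/-- Lower slack of the (extended) multinode `V_i(j)`. -/
noncomputable def delM (n : ℤ) (c d : ℤ → ℤ) (f : ℤ → ℤ → ℤ → ℤ) (i j : ℤ) : ℤ :=
  ∑ k ∈ Finset.Icc (1 : ℤ) n, delN n c d f k i j

/-- `π(p,q) = Σ_{r=p+1}^q ε_i(r) − Σ_{r=p}^{q-1} δ_i(r)`. -/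
noncomputable def piM (n : ℤ) (c d : ℤ → ℤ) (f : ℤ → ℤ → ℤ → ℤ) (i p q : ℤ) : ℤ :=
  (∑ r ∈ Finset.Icc (p + 1) q, epsM n c d f i r) -
  (∑ r ∈ Finset.Icc p (q - 1), delM n c d f i r)

/-- Residual upper slack `ε̃_i(j) = max(0, min_{0 ≤ p < j} π(p,j))`. -/
noncomputable def tEps (n : ℤ) (c d : ℤ → ℤ) (f : ℤ → ℤ → ℤ → ℤ) (i j : ℤ) : ℤ :=
  max 0 ((Finset.Icc (0 : ℤ) (j - 1)).fold min (piM n c d f i 0 j)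
    (fun p => piM n c d f i p j))

/-- Residual lower slack `δ̃_i(j) = max(0, min_{j < q ≤ i+1} (−π(j,q)))`. -/
noncomputable def tDel (n : ℤ) (c d : ℤ → ℤ) (f : ℤ → ℤ → ℤ → ℤ) (i j : ℤ) : ℤ :=
  max 0 ((Finset.Icc (j + 1) (i + 1)).fold min (-(piM n c d f i j (i + 1)))
    (fun q => -(piM n c d f i j q)))

/-- `V_i(j)` is the active multinode in level `i`: `j` is the minimal index
satisfying the vanishing conditions of (activ), and `ε̃_i(j) > 0`. -/
def ActiveAt (n : ℤ) (c d : ℤ → ℤ) (f : ℤ → ℤ → ℤ → ℤ) (i j : ℤ) : Prop :=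
  1 ≤ j ∧ j ≤ i ∧
  (∀ j', 0 ≤ j' → j' < j → tDel n c d f i j' = 0) ∧
  (∀ j', j < j' → j' ≤ i + 1 → tEps n c d f i j' = 0) ∧
  0 < tEps n c d f i j ∧
  (∀ j₀, 1 ≤ j₀ → j₀ < j →
     ¬ ((∀ j', 0 ≤ j' → j' < j₀ → tDel n c d f i j' = 0) ∧
        (∀ j', j₀ < j' → j' ≤ i + 1 → tEps n c d f i j' = 0)))

/-- The forward move in level `i`: increase the feasible function `f` by one at
the switch-node (first node satisfying the switch condition) of the active
multinode of level `i`. -/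
def Move (n : ℤ) (c d : ℤ → ℤ) (i : ℤ) (f f' : ℤ → ℤ → ℤ → ℤ) : Prop :=
  Feasible n c d f ∧
  ∃ j k, ActiveAt n c d f i j ∧
    (i - j + 1 ≤ k ∧ k ≤ n - j + 1 ∧ SwitchAt n f i j k ∧
      ∀ k', i - j + 1 ≤ k' → k' < k → ¬ SwitchAt n f i j k') ∧
    f' = fun k' i' j' => if k' = k ∧ i' = i ∧ j' = j then f k i j + 1 else f k' i' j'

/-!
Everything is governed by the potential `φ_i(j) = π_i(0, j) = Σ_{0 ≤ s < j} (δ_{i-1}(s) - δ_i(s))`.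
The active multinode of level `i` is the first maximum of `φ_i` on `[0, i + 1]`, so a move leaves
`f` as soon as `φ_i` is positive somewhere on `[1, i]`. Dually, if the maximum of `φ_i` on
`[0, i]` exceeds `φ_i(i + 1)`, let `V_i(j₀)` be its last position and lower `f` by one at the
lowest node of `V_i(j₀)` with positive lower slack: the result is still feasible and has `V_i(j₀)`
active, so it moves into `f`. Hence at a sink `φ_i ≤ 0`, which telescopes to vanishing vertical
steps and lifts every node to the value `c_k`; at a source `φ_i ≤ φ_i(i + 1)`, which telescopes
to vanishing lower slacks and slides every node diagonally down to the lower bound. Every move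
raises the total weight `Σ f` over the nodes by one, which counts the length of every path.
-/

namespace CrossingModel

open Finset

theorem sum_Icc_consecutive (u : ℤ → ℤ) {a b e : ℤ} (hab : a ≤ b + 1) (hbe : b ≤ e) :
    ∑ x ∈ Icc a b, u x + ∑ x ∈ Icc (b + 1) e, u x = ∑ x ∈ Icc a e, u x := by
  rw [← sum_union (disjoint_left.2 fun x hx hx' => by simp only [mem_Icc] at hx hx'; omega)]
  congr 1
  ext x
  simp only [mem_union, mem_Icc]
  omega

theorem sum_le_of_nonpos_of_ne {ι M : Type*} [DecidableEq ι] [AddCommMonoid M] [PartialOrder M]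
    [IsOrderedAddMonoid M] {s : Finset ι} {t : ι → M} {a : ι} (ha : a ∈ s)
    (h : ∀ x ∈ s, x ≠ a → t x ≤ 0) : ∑ x ∈ s, t x ≤ t a := by
  rw [← add_sum_erase s t ha]
  exact add_le_of_nonpos_right
    (sum_nonpos fun x hx => h x (mem_of_mem_erase hx) (ne_of_mem_erase hx))

theorem eq_of_forall_succ_eq (u : ℤ → ℤ) {a b : ℤ} (hab : a ≤ b)
    (h : ∀ t, a ≤ t → t < b → u (t + 1) = u t) : u b = u a := by
  induction b, hab using Int.leInduction with
  | base => rfl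
  | succ b hab ih => rw [h b hab (by omega), ih fun t h1 h2 => h t h1 (by omega)]

theorem exists_first_isMaxOn {α : Type*} [LinearOrder α] (u : ℤ → α) {a b : ℤ} (hab : a ≤ b) :
    ∃ m ∈ Icc a b, (∀ x ∈ Icc a b, u x ≤ u m) ∧ ∀ x ∈ Icc a b, x < m → u x < u m := by
  obtain ⟨x₀, hx₀, hmax⟩ := exists_max_image (Icc a b) u (nonempty_Icc.2 hab)
  obtain ⟨m, ⟨hm, hum⟩, hleast⟩ := Int.exists_least_of_bdd
    (P := fun x => x ∈ Icc a b ∧ u x = u x₀) ⟨a, fun x hx => (mem_Icc.1 hx.1).1⟩ ⟨x₀, hx₀, rfl⟩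
  refine ⟨m, hm, fun x hx => hum ▸ hmax x hx, fun x hx hxm => ?_⟩
  refine lt_of_le_of_ne (hum ▸ hmax x hx) fun hux => ?_
  exact absurd (hleast x ⟨hx, hux.trans hum⟩) (not_le.2 hxm)

theorem exists_last_isMaxOn {α : Type*} [LinearOrder α] (u : ℤ → α) {a b : ℤ} (hab : a ≤ b) :
    ∃ m ∈ Icc a b, (∀ x ∈ Icc a b, u x ≤ u m) ∧ ∀ x ∈ Icc a b, m < x → u x < u m := by
  obtain ⟨x₀, hx₀, hmax⟩ := exists_max_image (Icc a b) u (nonempty_Icc.2 hab)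
  obtain ⟨m, ⟨hm, hum⟩, hgreatest⟩ := Int.exists_greatest_of_bdd
    (P := fun x => x ∈ Icc a b ∧ u x = u x₀) ⟨b, fun x hx => (mem_Icc.1 hx.1).2⟩ ⟨x₀, hx₀, rfl⟩
  refine ⟨m, hm, fun x hx => hum ▸ hmax x hx, fun x hx hxm => ?_⟩
  refine lt_of_le_of_ne (hum ▸ hmax x hx) fun hux => ?_
  exact absurd (hgreatest x ⟨hx, hux.trans hum⟩) (not_le.2 hxm)

variable {n : ℤ} {c d : ℤ → ℤ} {f g : ℤ → ℤ → ℤ → ℤ} {k i j : ℤ}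

theorem extF_of_isCNode (h : IsCNode n k i j) : extF n c d f k i j = f k i j := if_pos h

theorem extF_of_left (h : j ≤ 0 ∨ j + k ≤ i) : extF n c d f k i j = c k := by
  rw [extF, if_neg (show ¬IsCNode n k i j by omega), if_pos h]

theorem extF_of_right (hj : 1 ≤ j) (hik : i < j + k) (h : ¬IsCNode n k i j) :
    extF n c d f k i j = d k := by
  rw [extF, if_neg h, if_neg (by omega)]

theorem lower_le_upper (hf : Feasible n c d f) (hk1 : 1 ≤ k) (hkn : k ≤ n) : d k ≤ c k :=
  (hf.1 k 1 1 (by omega)).1.trans (hf.1 k 1 1 (by omega)).2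

theorem lower_le_extF (hf : Feasible n c d f) (hk1 : 1 ≤ k) (hkn : k ≤ n) :
    d k ≤ extF n c d f k i j := by
  have hdc := lower_le_upper hf hk1 hkn
  have hb := hf.1 k i j
  unfold extF
  split_ifs <;> grind

theorem extF_diag_le (hf : Feasible n c d f) (hk1 : 1 ≤ k) (hkn : k ≤ n) :
    extF n c d f k (i + 1) (j + 1) ≤ extF n c d f k i j := by
  have hdc := lower_le_upper hf hk1 hkn
  have hb := hf.1 k i j
  have hb' := hf.1 k (i + 1) (j + 1)
  have hm := hf.2.2.1 k i j
  unfold extF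
  split_ifs <;> grind

theorem extF_le_extF_succ (hf : Feasible n c d f) (hk1 : 1 ≤ k) (hkn : k ≤ n) :
    extF n c d f k i j ≤ extF n c d f k (i + 1) j := by
  have hdc := lower_le_upper hf hk1 hkn
  have hb := hf.1 k i j
  have hb' := hf.1 k (i + 1) j
  have hm := hf.2.1 k (i + 1) j
  rw [add_sub_cancel_right] at hm
  unfold extF
  split_ifs <;> grind

theorem delN_nonneg (hf : Feasible n c d f) (hk1 : 1 ≤ k) (hkn : k ≤ n) :
    0 ≤ delN n c d f k i j :=
  sub_nonneg.2 (extF_diag_le hf hk1 hkn)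

theorem delM_nonneg (hf : Feasible n c d f) : 0 ≤ delM n c d f i j :=
  sum_nonneg fun _ hk => delN_nonneg hf (mem_Icc.1 hk).1 (mem_Icc.1 hk).2

theorem delM_eq_zero_of_lt (hj : 1 ≤ j) (hij : i < j) : delM n c d f i j = 0 :=
  sum_eq_zero fun k hk => by
    have hk1 := (mem_Icc.1 hk).1
    rw [delN, extF_of_right hj (by omega) (by omega),
      extF_of_right (by omega) (by omega) (by omega), sub_self]

theorem epsM_eq_delM (r : ℤ) : epsM n c d f i r = delM n c d f (i - 1) (r - 1) := by
  simp only [epsM, delM, epsN, delN, sub_add_cancel]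

noncomputable def phi (n : ℤ) (c d : ℤ → ℤ) (f : ℤ → ℤ → ℤ → ℤ) (i j : ℤ) : ℤ :=
  piM n c d f i 0 j

theorem phi_eq_sum (i j : ℤ) :
    phi n c d f i j = ∑ s ∈ Icc 0 (j - 1), (delM n c d f (i - 1) s - delM n c d f i s) := by
  rw [phi, piM, sum_sub_distrib, zero_add]
  congr 1
  simp only [epsM_eq_delM]
  exact sum_nbij' (· - 1) (· + 1) (by intro; simp only [mem_Icc]; omega)
    (by intro; simp only [mem_Icc]; omega) (fun _ _ => by ring) (fun _ _ => by ring)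
    (fun _ _ => rfl)

theorem phi_zero_right : phi n c d f i 0 = 0 := by
  simp [phi_eq_sum]

theorem phi_sub_phi {p q : ℤ} (hp : 0 ≤ p) (hpq : p ≤ q) :
    phi n c d f i q - phi n c d f i p =
      ∑ s ∈ Icc p (q - 1), (delM n c d f (i - 1) s - delM n c d f i s) := by
  rw [phi_eq_sum, phi_eq_sum, ← sum_Icc_consecutive _ (by omega : (0 : ℤ) ≤ p - 1 + 1)
    (by omega : p - 1 ≤ q - 1), sub_add_cancel, add_sub_cancel_left]

theorem phi_succ_sub (hj : 0 ≤ j) :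
    phi n c d f i (j + 1) - phi n c d f i j = delM n c d f (i - 1) j - delM n c d f i j := by
  rw [phi_sub_phi hj (by omega), add_sub_cancel_right, Icc_self, sum_singleton]

theorem piM_eq_phi_sub {p q : ℤ} (hp : 0 ≤ p) (hpq : p ≤ q) :
    piM n c d f i p q = phi n c d f i q - phi n c d f i p := by
  simp only [phi, piM]
  rw [← sum_Icc_consecutive (fun r => epsM n c d f i r) (by omega : (0 : ℤ) + 1 ≤ p + 1) hpq,
    ← sum_Icc_consecutive (fun r => delM n c d f i r) (by omega : (0 : ℤ) ≤ p - 1 + 1)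
      (by omega : p - 1 ≤ q - 1), sub_add_cancel]
  ring

theorem phi_one_nonneg (hf : Feasible n c d f) : 0 ≤ phi n c d f i 1 := by
  rw [phi_eq_sum, sub_self, Icc_self, sum_singleton, delM, delM, ← sum_sub_distrib]
  refine sum_nonneg fun k hk => ?_
  obtain ⟨hk1, hkn⟩ := mem_Icc.1 hk
  have hvert := extF_le_extF_succ (i := i) (j := 1) hf hk1 hkn
  rw [delN, delN, sub_add_cancel, zero_add, extF_of_left (Or.inl le_rfl),
    extF_of_left (Or.inl le_rfl)]
  omega

theorem phi_succ_self_le (hf : Feasible n c d f) (hi : 1 ≤ i) :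
    phi n c d f i (i + 1) ≤ phi n c d f i i := by
  have hstep := phi_succ_sub (n := n) (c := c) (d := d) (f := f) (i := i) (j := i) (by omega)
  rw [delM_eq_zero_of_lt hi (by omega)] at hstep
  have := delM_nonneg (i := i) (j := i) hf
  omega

theorem tEps_pos_of_lt (hj : 1 ≤ j)
    (h : ∀ p, 0 ≤ p → p < j → phi n c d f i p < phi n c d f i j) : 0 < tEps n c d f i j := by
  have hpi : ∀ p ∈ Icc 0 (j - 1), 1 ≤ piM n c d f i p j := fun p hp => by
    obtain ⟨hp0, hpj⟩ := mem_Icc.1 hp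
    rw [piM_eq_phi_sub hp0 (by omega)]
    linarith [h p hp0 (by omega)]
  rw [tEps]
  exact lt_max_of_lt_right (zero_lt_one.trans_le ((le_fold_min _).2 ⟨hpi 0 (by simp; omega), hpi⟩))

theorem tEps_eq_zero_of_le {p : ℤ} (hp : 0 ≤ p) (hpj : p < j)
    (h : phi n c d f i j ≤ phi n c d f i p) : tEps n c d f i j = 0 := by
  have hpi : piM n c d f i p j ≤ 0 := by rw [piM_eq_phi_sub hp hpj.le]; omega
  rw [tEps, max_eq_left]
  exact (fold_min_le _).2 (Or.inr ⟨p, mem_Icc.2 ⟨hp, by omega⟩, hpi⟩)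

theorem tDel_eq_zero_of_le {q : ℤ} (hj : 0 ≤ j) (hjq : j < q) (hq : q ≤ i + 1)
    (h : phi n c d f i j ≤ phi n c d f i q) : tDel n c d f i j = 0 := by
  have hpi : -piM n c d f i j q ≤ 0 := by rw [piM_eq_phi_sub hj hjq.le]; omega
  rw [tDel, max_eq_left]
  exact (fold_min_le _).2 (Or.inr ⟨q, mem_Icc.2 ⟨by omega, hq⟩, hpi⟩)

theorem activeAt_of_isFirstMax (hj : 1 ≤ j) (hji : j ≤ i)
    (hbefore : ∀ p, 0 ≤ p → p < j → phi n c d f i p < phi n c d f i j)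
    (hafter : ∀ q, j < q → q ≤ i + 1 → phi n c d f i q ≤ phi n c d f i j) :
    ActiveAt n c d f i j := by
  have hpos := tEps_pos_of_lt hj hbefore
  refine ⟨hj, hji, fun p hp hpj => ?_, fun q hjq hq => ?_, hpos, fun j₀ _ hj₀ hzero => ?_⟩
  · exact tDel_eq_zero_of_le hp hpj (by omega) (hbefore p hp hpj).le
  · exact tEps_eq_zero_of_le (by omega) hjq (hafter q hjq hq)
  · exact hpos.ne' (hzero.2 j hj₀ (by omega))

theorem exists_move_from (hf : Feasible n c d f) (hi : 1 ≤ i) (hin : i ≤ n)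
    (hj : 1 ≤ j) (hji : j ≤ i) (hpos : 0 < phi n c d f i j) : ∃ f', Move n c d i f f' := by
  obtain ⟨j₁, hj₁, hmax, hfirst⟩ := exists_first_isMaxOn (phi n c d f i) (by omega : 0 ≤ i)
  obtain ⟨hj₁0, hj₁i⟩ := mem_Icc.1 hj₁
  have hj₁pos : 0 < phi n c d f i j₁ := hpos.trans_le (hmax j (mem_Icc.2 ⟨by omega, hji⟩))
  have hj₁1 : 1 ≤ j₁ := by
    by_contra! h
    rw [show j₁ = 0 by omega, phi_zero_right] at hj₁pos
    exact hj₁pos.false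
  have hact : ActiveAt n c d f i j₁ := by
    refine activeAt_of_isFirstMax hj₁1 hj₁i
      (fun p hp hpj => hfirst p (mem_Icc.2 ⟨hp, by omega⟩) hpj) fun q hjq hq => ?_
    rcases hq.eq_or_lt with rfl | hq
    · exact (phi_succ_self_le hf hi).trans (hmax i (mem_Icc.2 ⟨by omega, le_rfl⟩))
    · exact hmax q (mem_Icc.2 ⟨by omega, by omega⟩)
  obtain ⟨ks, hks1, hks2, hsw⟩ := hf.2.2.2 i j₁ hj₁1 hj₁i hin
  obtain ⟨k₁, ⟨hk₁1, hk₁2, hk₁sw⟩, hleast⟩ := Int.exists_least_of_bdd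
    (P := fun k => i - j₁ + 1 ≤ k ∧ k ≤ n - j₁ + 1 ∧ SwitchAt n f i j₁ k)
    ⟨i - j₁ + 1, fun _ h => h.1⟩ ⟨ks, hks1, hks2, hsw⟩
  exact ⟨_, hf, j₁, k₁, hact,
    ⟨hk₁1, hk₁2, hk₁sw, fun k' h1 h2 hsw' => absurd (hleast k' ⟨h1, by omega, hsw'⟩) (by omega)⟩,
    rfl⟩

noncomputable def vertJump (n : ℤ) (c d : ℤ → ℤ) (f : ℤ → ℤ → ℤ → ℤ) (a r : ℤ) : ℤ :=
  ∑ k ∈ Icc 1 n, (extF n c d f k (a + 1) r - extF n c d f k a r)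

theorem vertJump_nonneg (hf : Feasible n c d f) (a r : ℤ) : 0 ≤ vertJump n c d f a r :=
  sum_nonneg fun _ hk => sub_nonneg.2 (extF_le_extF_succ hf (mem_Icc.1 hk).1 (mem_Icc.1 hk).2)

theorem phi_eq_sum_vertJump : phi n c d f i j =
    ∑ r ∈ Icc 1 j, vertJump n c d f i r - ∑ r ∈ Icc 1 (j - 1), vertJump n c d f (i - 1) r := by
  have hdiff : ∀ s, delM n c d f (i - 1) s - delM n c d f i s =
      vertJump n c d f i (s + 1) - vertJump n c d f (i - 1) s := fun s => by
    simp only [delM, delN, vertJump, ← sum_sub_distrib, sub_add_cancel]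
    exact sum_congr rfl fun _ _ => by ring
  have hcol0 : vertJump n c d f (i - 1) 0 = 0 :=
    sum_eq_zero fun _ _ => by rw [extF_of_left (Or.inl le_rfl), extF_of_left (Or.inl le_rfl),
      sub_self]
  rw [phi_eq_sum, sum_congr rfl fun s _ => hdiff s, sum_sub_distrib]
  congr 1
  · exact sum_nbij' (· + 1) (· - 1) (by intro; simp only [mem_Icc]; omega)
      (by intro; simp only [mem_Icc]; omega) (fun _ _ => by ring) (fun _ _ => by ring)
      (fun _ _ => rfl)
  · refine (sum_subset (Icc_subset_Icc_left zero_le_one) fun s hs hs' => ?_).symm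
    rw [show s = 0 by simp only [mem_Icc] at hs hs'; omega, hcol0]

theorem vertJump_eq_zero_of_phi_nonpos (hf : Feasible n c d f)
    (H : ∀ i j, 1 ≤ i → i ≤ n → 1 ≤ j → j ≤ i → phi n c d f i j ≤ 0)
    (hin : i ≤ n) (hr : 1 ≤ j) (hri : j ≤ i) : vertJump n c d f i j = 0 := by
  have hcum : ∀ j, 1 ≤ j → ∀ i, j ≤ i → i ≤ n → ∑ r ∈ Icc 1 j, vertJump n c d f i r ≤ 0 := by
    intro j hj
    induction j, hj using Int.leInduction with
    | base =>
      intro i hi hin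
      simpa [phi_eq_sum_vertJump] using H i 1 (by omega) hin le_rfl hi
    | succ j hj ih =>
      intro i hi hin
      have h := H i (j + 1) (by omega) hin (by omega) hi
      rw [phi_eq_sum_vertJump, add_sub_cancel_right] at h
      linarith [ih (i - 1) (by omega) (by omega)]
  have hsum := le_antisymm (hcum i (by omega) i le_rfl hin)
    (sum_nonneg fun r _ => vertJump_nonneg hf i r)
  exact (sum_eq_zero_iff_of_nonneg fun r _ => vertJump_nonneg hf i r).1 hsum j
    (mem_Icc.2 ⟨hr, hri⟩)

theorem eq_upper_of_phi_nonpos (hf : Feasible n c d f)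
    (H : ∀ i j, 1 ≤ i → i ≤ n → 1 ≤ j → j ≤ i → phi n c d f i j ≤ 0)
    (hnode : IsCNode n k i j) : f k i j = c k := by
  have hstep : ∀ t, i ≤ t → t < n + 1 → extF n c d f k (t + 1) j = extF n c d f k t j := by
    intro t hit htn
    have hzero := vertJump_eq_zero_of_phi_nonpos (i := t) (j := j) hf H (by omega) (by omega)
      (by omega)
    rw [vertJump, sum_eq_zero_iff_of_nonneg fun k hk =>
      sub_nonneg.2 (extF_le_extF_succ hf (mem_Icc.1 hk).1 (mem_Icc.1 hk).2)] at hzero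
    exact sub_eq_zero.1 (hzero k (mem_Icc.2 ⟨by omega, by omega⟩))
  have := eq_of_forall_succ_eq (fun t => extF n c d f k t j) (by omega : i ≤ n + 1) hstep
  rwa [extF_of_left (Or.inr (by omega)), extF_of_isCNode hnode, eq_comm] at this

theorem sum_delM_nonpos_of_phi_le
    (H : ∀ i j, 1 ≤ i → i ≤ n → 0 ≤ j → j ≤ i → phi n c d f i j ≤ phi n c d f i (i + 1))
    (hj : 1 ≤ j) (hji : j - 1 ≤ i) (hin : i ≤ n) : ∑ s ∈ Icc j i, delM n c d f i s ≤ 0 := by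
  induction i, hji using Int.leInduction with
  | base => simp
  | succ i hji ih =>
    have htail := sub_nonneg.2 (H (i + 1) j (by omega) hin (by omega) (by omega))
    rw [phi_sub_phi (by omega) (by omega), add_sub_cancel_right, add_sub_cancel_right,
      sum_sub_distrib, ← sum_Icc_consecutive (fun s => delM n c d f i s) (by omega : j ≤ i + 1)
      (by omega : i ≤ i + 1), Icc_self, sum_singleton, delM_eq_zero_of_lt (by omega) (by omega)]
      at htail
    linarith [ih (by omega)]

theorem eq_lower_of_phi_le (hf : Feasible n c d f)
    (H : ∀ i j, 1 ≤ i → i ≤ n → 0 ≤ j → j ≤ i → phi n c d f i j ≤ phi n c d f i (i + 1))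
    (hnode : IsCNode n k i j) : f k i j = d k := by
  have hstep : ∀ t, j ≤ t → t < n - k + 2 →
      extF n c d f k (i - j + (t + 1)) (t + 1) = extF n c d f k (i - j + t) t := by
    intro t hjt htn
    have hsum := le_antisymm
      (sum_delM_nonpos_of_phi_le (i := i - j + t) (j := t) H (by omega) (by omega) (by omega))
      (sum_nonneg fun s _ => delM_nonneg (i := i - j + t) (j := s) hf)
    have hzero := (sum_eq_zero_iff_of_nonneg fun s _ => delM_nonneg hf).1 hsum t
      (mem_Icc.2 ⟨by omega, by omega⟩)
    rw [delM, sum_eq_zero_iff_of_nonneg fun k hk =>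
      delN_nonneg hf (mem_Icc.1 hk).1 (mem_Icc.1 hk).2] at hzero
    have := hzero k (mem_Icc.2 ⟨by omega, by omega⟩)
    rw [delN, sub_eq_zero] at this
    rw [← add_assoc, this]
  have := eq_of_forall_succ_eq (fun t => extF n c d f k (i - j + t) t)
    (by omega : j ≤ n - k + 2) hstep
  rwa [extF_of_right (by omega) (by omega) (by omega), sub_add_cancel, extF_of_isCNode hnode,
    eq_comm] at this

theorem isCNode_of_delN_ne_zero (hj : 1 ≤ j) (hji : j ≤ i) (hk : 1 ≤ k)
    (h : delN n c d f k i j ≠ 0) : IsCNode n k i j := by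
  by_contra hnode
  apply h
  unfold delN extF
  split_ifs <;> omega

theorem _root_.SwitchAt.extF_se {k' : ℤ} (h : SwitchAt n f i j k) (hj : 1 ≤ j) (hji : j ≤ i)
    (hkn : k ≤ n - j + 1) (hk'1 : 1 ≤ k') (hk' : k' < k) :
    extF n c d f k' (i + 1) (j + 1) = extF n c d f k' i j := by
  by_cases hleft : k' ≤ i - j
  · rw [extF_of_left (Or.inr (by omega)), extF_of_left (Or.inr (by omega))]
  · rw [extF_of_isCNode (show IsCNode n k' (i + 1) (j + 1) by omega),
      extF_of_isCNode (show IsCNode n k' i j by omega)]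
    exact h.1 k' (by omega) hk' (by omega)

theorem _root_.SwitchAt.extF_sw {k' : ℤ} (h : SwitchAt n f i j k) (hj : 1 ≤ j) (hji : j ≤ i)
    (hk : i - j + 1 ≤ k) (hk' : k < k') (hk'n : k' ≤ n) :
    extF n c d f k' (i + 1) j = extF n c d f k' i j := by
  by_cases hcol : k' ≤ n - j + 1
  · rw [extF_of_isCNode (show IsCNode n k' (i + 1) j by omega),
      extF_of_isCNode (show IsCNode n k' i j by omega)]
    exact h.2 k' hk' hcol (by omega)
  · rw [extF_of_right hj (by omega) (by omega), extF_of_right hj (by omega) (by omega)]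

theorem _root_.SwitchAt.congr (h : SwitchAt n f i j k)
    (hse : ∀ k', k' < k → g k' (i + 1) (j + 1) = f k' (i + 1) (j + 1) ∧ g k' i j = f k' i j)
    (hsw : ∀ k', k < k' → g k' (i + 1) j = f k' (i + 1) j ∧ g k' i j = f k' i j) :
    SwitchAt n g i j k :=
  ⟨fun k' h1 h2 hn => by rw [(hse k' h2).1, (hse k' h2).2]; exact h.1 k' h1 h2 hn,
    fun k' h1 h2 hn => by rw [(hsw k' h1).1, (hsw k' h1).2]; exact h.2 k' h1 h2 hn⟩

def lowerAt (f : ℤ → ℤ → ℤ → ℤ) (k₀ i₀ j₀ : ℤ) : ℤ → ℤ → ℤ → ℤ :=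
  fun k i j => f k i j - if k = k₀ ∧ i = i₀ ∧ j = j₀ then 1 else 0

section lowerAt

variable {k₀ i₀ j₀ : ℤ}

theorem lowerAt_apply_of_ne (h : ¬(k = k₀ ∧ i = i₀ ∧ j = j₀)) :
    lowerAt f k₀ i₀ j₀ k i j = f k i j := by
  simp [lowerAt, h]

theorem lowerAt_apply_self : lowerAt f k₀ i₀ j₀ k₀ i₀ j₀ = f k₀ i₀ j₀ - 1 := by
  simp [lowerAt]

theorem lowerAt_le : lowerAt f k₀ i₀ j₀ k i j ≤ f k i j := by
  unfold lowerAt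
  split_ifs <;> omega

theorem extF_lowerAt (hnode : IsCNode n k₀ i₀ j₀) (k a b : ℤ) :
    extF n c d (lowerAt f k₀ i₀ j₀) k a b =
      extF n c d f k a b - if k = k₀ ∧ a = i₀ ∧ b = j₀ then 1 else 0 := by
  by_cases h : k = k₀ ∧ a = i₀ ∧ b = j₀
  · obtain ⟨rfl, rfl, rfl⟩ := h
    simp [extF_of_isCNode hnode, lowerAt]
  · rw [if_neg h, sub_zero]
    unfold extF
    split_ifs <;> first | rfl | exact lowerAt_apply_of_ne h

theorem delM_lowerAt (hnode : IsCNode n k₀ i₀ j₀) (a b : ℤ) :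
    delM n c d (lowerAt f k₀ i₀ j₀) a b = delM n c d f a b -
      (if a = i₀ ∧ b = j₀ then 1 else 0) + (if a + 1 = i₀ ∧ b + 1 = j₀ then 1 else 0) := by
  have hk₀ : k₀ ∈ Icc 1 n := mem_Icc.2 ⟨by omega, by omega⟩
  simp only [delM, delN, extF_lowerAt hnode, ite_and, sum_sub_distrib, sum_ite_eq', hk₀,
    ↓reduceIte]
  ring

theorem phi_lowerAt (hnode : IsCNode n k₀ i j₀) (q : ℤ) :
    phi n c d (lowerAt f k₀ i j₀) i q =
      phi n c d f i q + (if j₀ ≤ q then 1 else 0) + (if j₀ < q then 1 else 0) := by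
  have h₁ : i - 1 ≠ i := by omega
  have h₂ : i + 1 ≠ i := by omega
  simp only [phi_eq_sum, delM_lowerAt hnode, h₁, h₂, sub_add_cancel, false_and, true_and,
    if_false, ← eq_sub_iff_add_eq, sub_zero, add_zero, sum_sub_distrib, sum_add_distrib,
    sum_ite_eq', mem_Icc]
  split_ifs <;> omega

end lowerAt

theorem switchAt_of_least_delN_pos (hf : Feasible n c d f) (hj : 1 ≤ j) (hji : j ≤ i)
    (hin : i ≤ n) (hk : 1 ≤ k) (hpos : 0 < delN n c d f k i j)
    (hbelow : ∀ k', 1 ≤ k' → k' < k → delN n c d f k' i j = 0) : SwitchAt n f i j k := by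
  obtain ⟨ks, -, hks, hsw⟩ := hf.2.2.2 i j hj hji hin
  have hksk : ks ≤ k := by
    by_contra! hlt
    rw [delN, hsw.extF_se hj hji hks hk hlt, sub_self] at hpos
    exact hpos.false
  refine ⟨fun k' _ hk' hnode => ?_, fun k' hk' hk'n hnode => hsw.2 k' (by omega) hk'n hnode⟩
  have := hbelow k' (by omega) hk'
  rwa [delN, sub_eq_zero, extF_of_isCNode (show IsCNode n k' i j by omega),
    extF_of_isCNode hnode, eq_comm] at this

/-- Write `δ_i(j) - δ_{i-1}(j)` as a sum over the layers `k'` of differences of lower slacks: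
every layer other than `k` contributes at most `0` (below `k` by minimality, above the switch of
`V_{i-1}(j)` by its tight SW-edges), so layer `k` carries the whole increase. -/
theorem lt_of_delM_pred_lt (hf : Feasible n c d f) (hj : 1 ≤ j) (hji : j < i) (hin : i ≤ n)
    (hk1 : 1 ≤ k) (hkn : k ≤ n) (hpos : 0 < delN n c d f k i j)
    (hbelow : ∀ k', 1 ≤ k' → k' < k → delN n c d f k' i j = 0)
    (hgrow : delM n c d f (i - 1) j < delM n c d f i j) : f k (i - 1) j < f k i j := by
  have hnode := isCNode_of_delN_ne_zero (by omega) hji.le hk1 hpos.ne'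
  rw [← extF_of_isCNode (c := c) (d := d) (f := f) hnode,
    ← extF_of_isCNode (c := c) (d := d) (f := f) (show IsCNode n k (i - 1) j by omega)]
  obtain ⟨kt, hkt, hkt2, hswt⟩ := hf.2.2.2 (i - 1) j hj (by omega) (by omega)
  have hvert := extF_le_extF_succ (c := c) (d := d) (i := i) (j := j + 1) hf hk1 hkn
  rcases lt_or_ge k kt with hlt | hle
  · have hse := hswt.extF_se (c := c) (d := d) hj (by omega) hkt2 hk1 hlt
    rw [sub_add_cancel] at hse
    rw [delN] at hpos
    omega
  · have hsum : ∑ k' ∈ Icc 1 n, (delN n c d f k' i j - delN n c d f k' (i - 1) j) ≤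
        delN n c d f k i j - delN n c d f k (i - 1) j := by
      refine sum_le_of_nonpos_of_ne (mem_Icc.2 ⟨hk1, hkn⟩) fun k' hk' hne => ?_
      obtain ⟨hk'1, hk'n⟩ := mem_Icc.1 hk'
      rcases hne.lt_or_gt with hlt | hgt
      · rw [hbelow k' hk'1 hlt, zero_sub, neg_nonpos]
        exact delN_nonneg hf hk'1 hk'n
      · have hsw := hswt.extF_sw (c := c) (d := d) hj (by omega) hkt (by omega) hk'n
        have := extF_le_extF_succ (c := c) (d := d) (i := i) (j := j + 1) hf hk'1 hk'n
        rw [sub_add_cancel] at hsw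
        simp only [delN, sub_add_cancel]
        omega
    rw [sum_sub_distrib, ← delM, ← delM] at hsum
    simp only [delN, sub_add_cancel] at hsum
    omega

theorem exists_switchAt_lowerAt_pred (hf : Feasible n c d f) (hj : 1 ≤ j) (hji : j < i)
    (hin : i ≤ n) (hnode : IsCNode n k i j) (hlt : f k (i - 1) j < f k i j) :
    ∃ k', i - 1 - j + 1 ≤ k' ∧ k' ≤ n - j + 1 ∧ SwitchAt n (lowerAt f k i j) (i - 1) j k' := by
  obtain ⟨kt, hkt1, hkt2, hswt⟩ := hf.2.2.2 (i - 1) j hj (by omega) (by omega)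
  have hkkt : k ≤ kt := by
    by_contra! hlt'
    have := hswt.2 k hlt' (by omega) (by rw [sub_add_cancel]; exact hnode)
    rw [sub_add_cancel] at this
    omega
  refine ⟨kt, hkt1, hkt2, hswt.congr (fun k' _ => ?_) fun k' hk' => ?_⟩
  · exact ⟨lowerAt_apply_of_ne (by omega), lowerAt_apply_of_ne (by omega)⟩
  · exact ⟨lowerAt_apply_of_ne (by omega), lowerAt_apply_of_ne (by omega)⟩

/-- Layer by layer, the lower slack at `v_i(j-1)` minus that at `v_{i-1}(j-1)` is nonnegative:
below `k` the SE-edges of `V_{i-1}(j-1)` are tight, above `k` it is the vertical step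
`f(v_i(j-1)) - f(v_{i-1}(j-1))`. These sum to `δ_i(j-1) - δ_{i-1}(j-1) ≤ 0`, so all vanish. -/
theorem extF_eq_of_delM_le (hf : Feasible n c d f) (hj : 2 ≤ j) (hji : j ≤ i) {k₂ : ℤ}
    (hsw : SwitchAt n f (i - 1) (j - 1) k₂) (hk₂ : k₂ ≤ n - (j - 1) + 1) (hkk₂ : k < k₂)
    (htop : ∀ k', k < k' → k' ≤ n → extF n c d f k' (i + 1) j = extF n c d f k' i j)
    (hdel : delM n c d f i (j - 1) ≤ delM n c d f (i - 1) (j - 1)) {k' : ℤ} (hk'1 : 1 ≤ k')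
    (hk' : k < k') (hk'n : k' ≤ n) :
    extF n c d f k' i (j - 1) = extF n c d f k' (i - 1) (j - 1) := by
  have hterm : ∀ k' ∈ Icc 1 n, 0 ≤ delN n c d f k' i (j - 1) - delN n c d f k' (i - 1) (j - 1) ∧
      (k < k' → delN n c d f k' i (j - 1) - delN n c d f k' (i - 1) (j - 1) =
        extF n c d f k' i (j - 1) - extF n c d f k' (i - 1) (j - 1)) := by
    intro k' hk'
    obtain ⟨hk'1, hk'n⟩ := mem_Icc.1 hk'
    simp only [delN, sub_add_cancel]
    rcases le_or_gt k' k with hle | hgt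
    · have hse := hsw.extF_se (c := c) (d := d) (by omega) (by omega) hk₂ hk'1 (by omega)
      have := delN_nonneg (c := c) (d := d) (i := i) (j := j - 1) hf hk'1 hk'n
      simp only [delN, sub_add_cancel] at hse this
      omega
    · have := extF_le_extF_succ (c := c) (d := d) (i := i - 1) (j := j - 1) hf hk'1 hk'n
      rw [sub_add_cancel] at this
      have := htop k' hgt hk'n
      omega
  have hsum : ∑ k' ∈ Icc 1 n, (delN n c d f k' i (j - 1) - delN n c d f k' (i - 1) (j - 1)) = 0 :=
    le_antisymm (by rw [sum_sub_distrib, ← delM, ← delM]; omega)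
      (sum_nonneg fun k' hk' => (hterm k' hk').1)
  have hmem : k' ∈ Icc 1 n := mem_Icc.2 ⟨hk'1, hk'n⟩
  have := (sum_eq_zero_iff_of_nonneg fun k' hk' => (hterm k' hk').1).1 hsum k' hmem
  rw [(hterm k' hmem).2 hk'] at this
  omega

theorem exists_switchAt_lowerAt_pred_pred (hf : Feasible n c d f) (hj : 2 ≤ j) (hji : j ≤ i)
    (hin : i ≤ n) (hnode : IsCNode n k i j) (hsw : SwitchAt n f i j k)
    (hdel : delM n c d f i (j - 1) ≤ delM n c d f (i - 1) (j - 1)) :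
    ∃ k', i - 1 - (j - 1) + 1 ≤ k' ∧ k' ≤ n - (j - 1) + 1 ∧
      SwitchAt n (lowerAt f k i j) (i - 1) (j - 1) k' := by
  obtain ⟨k₂, hk₂1, hk₂2, hsw₂⟩ := hf.2.2.2 (i - 1) (j - 1) (by omega) (by omega) (by omega)
  rcases le_or_gt k₂ k with hle | hlt
  · refine ⟨k₂, hk₂1, hk₂2, hsw₂.congr (fun k' _ => ?_) fun k' _ => ?_⟩
    · exact ⟨lowerAt_apply_of_ne (by omega), lowerAt_apply_of_ne (by omega)⟩
    · exact ⟨lowerAt_apply_of_ne (by omega), lowerAt_apply_of_ne (by omega)⟩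
  · refine ⟨k, by omega, by omega, ⟨fun k' h1 h2 hn => ?_, fun k' h1 h2 hn => ?_⟩⟩
    · rw [lowerAt_apply_of_ne (by omega), lowerAt_apply_of_ne (by omega)]
      exact hsw₂.1 k' h1 (by omega) hn
    · rw [lowerAt_apply_of_ne (by omega), lowerAt_apply_of_ne (by omega), sub_add_cancel]
      have htop : ∀ k', k < k' → k' ≤ n → extF n c d f k' (i + 1) j = extF n c d f k' i j :=
        fun k' hk' hk'n => hsw.extF_sw (by omega) hji (by omega) hk' hk'n
      have := extF_eq_of_delM_le hf hj hji hsw₂ hk₂2 hlt htop hdel (by omega) h1 (by omega)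
      rwa [extF_of_isCNode (show IsCNode n k' i (j - 1) by omega),
        extF_of_isCNode (show IsCNode n k' (i - 1) (j - 1) by omega)] at this

theorem feasible_lowerAt (hf : Feasible n c d f) (hnode : IsCNode n k i j)
    (hpos : 0 < delN n c d f k i j) (hvert : j < i → f k (i - 1) j < f k i j)
    (hsw : SwitchAt n f i j k)
    (hpred : j < i →
      ∃ k', i - 1 - j + 1 ≤ k' ∧ k' ≤ n - j + 1 ∧ SwitchAt n (lowerAt f k i j) (i - 1) j k')
    (hpred₂ : 2 ≤ j → ∃ k', i - 1 - (j - 1) + 1 ≤ k' ∧ k' ≤ n - (j - 1) + 1 ∧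
      SwitchAt n (lowerAt f k i j) (i - 1) (j - 1) k') :
    Feasible n c d (lowerAt f k i j) := by
  have hdiag : extF n c d f k (i + 1) (j + 1) < f k i j := by
    rw [delN, extF_of_isCNode hnode] at hpos
    omega
  have hlow : d k < f k i j :=
    (lower_le_extF hf (by omega) (by omega)).trans_lt hdiag
  refine ⟨fun k' a b hn => ⟨?_, lowerAt_le.trans (hf.1 k' a b hn).2⟩, fun k' a b hn hn' => ?_,
    fun k' a b hn hn' => ?_, fun a b hb hba han => ?_⟩
  · by_cases h : k' = k ∧ a = i ∧ b = j
    · obtain ⟨rfl, rfl, rfl⟩ := h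
      rw [lowerAt_apply_self]
      omega
    · rw [lowerAt_apply_of_ne h]
      exact (hf.1 k' a b hn).1
  · by_cases h : k' = k ∧ a = i ∧ b = j
    · obtain ⟨rfl, rfl, rfl⟩ := h
      rw [lowerAt_apply_self, lowerAt_apply_of_ne (by omega)]
      have := hvert (by omega)
      omega
    · rw [lowerAt_apply_of_ne h]
      exact lowerAt_le.trans (hf.2.1 k' a b hn hn')
  · by_cases h : k' = k ∧ a = i ∧ b = j
    · obtain ⟨rfl, rfl, rfl⟩ := h
      rw [lowerAt_apply_self, lowerAt_apply_of_ne (by omega)]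
      rw [extF_of_isCNode hn'] at hdiag
      omega
    · rw [lowerAt_apply_of_ne h]
      exact lowerAt_le.trans (hf.2.2.1 k' a b hn hn')
  · by_cases h₀ : a = i ∧ b = j
    · obtain ⟨rfl, rfl⟩ := h₀
      refine ⟨k, by omega, by omega, hsw.congr (fun k' _ => ?_) fun k' _ => ?_⟩
      · exact ⟨lowerAt_apply_of_ne (by omega), lowerAt_apply_of_ne (by omega)⟩
      · exact ⟨lowerAt_apply_of_ne (by omega), lowerAt_apply_of_ne (by omega)⟩
    by_cases h₁ : a = i - 1 ∧ b = j
    · obtain ⟨rfl, rfl⟩ := h₁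
      exact hpred (by omega)
    by_cases h₂ : a = i - 1 ∧ b = j - 1
    · obtain ⟨rfl, rfl⟩ := h₂
      exact hpred₂ (by omega)
    obtain ⟨k', hk'1, hk'2, hsw'⟩ := hf.2.2.2 a b hb hba han
    refine ⟨k', hk'1, hk'2, hsw'.congr (fun k'' _ => ?_) fun k'' _ => ?_⟩
    · exact ⟨lowerAt_apply_of_ne (by omega), lowerAt_apply_of_ne (by omega)⟩
    · exact ⟨lowerAt_apply_of_ne (by omega), lowerAt_apply_of_ne (by omega)⟩

theorem move_lowerAt (hf : Feasible n c d f) (hin : i ≤ n) {j₀ k₀ : ℤ} (hj₀ : 1 ≤ j₀)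
    (hj₀i : j₀ ≤ i) (hmax : ∀ p, 0 ≤ p → p < j₀ → phi n c d f i p ≤ phi n c d f i j₀)
    (hafter : ∀ q, j₀ < q → q ≤ i + 1 → phi n c d f i q < phi n c d f i j₀)
    (hk₀ : 1 ≤ k₀) (hk₀n : k₀ ≤ n) (hpos : 0 < delN n c d f k₀ i j₀)
    (hbelow : ∀ k', 1 ≤ k' → k' < k₀ → delN n c d f k' i j₀ = 0) :
    Move n c d i (lowerAt f k₀ i j₀) f := by
  have hnode := isCNode_of_delN_ne_zero hj₀ hj₀i hk₀ hpos.ne'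
  have hsw := switchAt_of_least_delN_pos hf hj₀ hj₀i hin hk₀ hpos hbelow
  have hgrow : delM n c d f (i - 1) j₀ < delM n c d f i j₀ := by
    have := phi_succ_sub (n := n) (c := c) (d := d) (f := f) (i := i) (by omega : 0 ≤ j₀)
    linarith [hafter (j₀ + 1) (by omega) (by omega)]
  have hvert : j₀ < i → f k₀ (i - 1) j₀ < f k₀ i j₀ := fun h =>
    lt_of_delM_pred_lt hf hj₀ h hin hk₀ hk₀n hpos hbelow hgrow
  have hdel : 2 ≤ j₀ → delM n c d f i (j₀ - 1) ≤ delM n c d f (i - 1) (j₀ - 1) := fun h => by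
    have := phi_succ_sub (n := n) (c := c) (d := d) (f := f) (i := i) (by omega : 0 ≤ j₀ - 1)
    rw [sub_add_cancel] at this
    linarith [hmax (j₀ - 1) (by omega) (by omega)]
  have hfeas := feasible_lowerAt hf hnode hpos hvert hsw
    (fun h => exists_switchAt_lowerAt_pred hf hj₀ h hin hnode (hvert h))
    (fun h => exists_switchAt_lowerAt_pred_pred hf h hj₀i hin hnode hsw (hdel h))
  have hact : ActiveAt n c d (lowerAt f k₀ i j₀) i j₀ := by
    refine activeAt_of_isFirstMax hj₀ hj₀i (fun p hp hpj => ?_) fun q hq hqi => ?_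
    · rw [phi_lowerAt hnode, phi_lowerAt hnode]
      have := hmax p hp hpj
      split_ifs <;> omega
    · rw [phi_lowerAt hnode, phi_lowerAt hnode]
      have := hafter q hq hqi
      split_ifs <;> omega
  refine ⟨hfeas, j₀, k₀, hact, ⟨by omega, by omega, hsw.congr (fun k' _ => ?_) fun k' _ => ?_,
    fun k' hk' hk'k₀ hsw' => ?_⟩, ?_⟩
  · exact ⟨lowerAt_apply_of_ne (by omega), lowerAt_apply_of_ne (by omega)⟩
  · exact ⟨lowerAt_apply_of_ne (by omega), lowerAt_apply_of_ne (by omega)⟩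
  · have htight := hsw'.2 k₀ hk'k₀ (by omega) (show IsCNode n k₀ (i + 1) j₀ by omega)
    have hmono := hf.2.1 k₀ (i + 1) j₀ (by omega) (by rw [add_sub_cancel_right]; exact hnode)
    rw [lowerAt_apply_of_ne (by omega), lowerAt_apply_self] at htight
    rw [add_sub_cancel_right] at hmono
    omega
  · funext k' a b
    by_cases h : k' = k₀ ∧ a = i ∧ b = j₀
    · obtain ⟨rfl, rfl, rfl⟩ := h
      simp [lowerAt_apply_self]
    · simp [h, lowerAt_apply_of_ne h]

theorem exists_move_to (hf : Feasible n c d f) (hi : 1 ≤ i) (hin : i ≤ n) (hj : 0 ≤ j)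
    (hji : j ≤ i) (hlt : phi n c d f i (i + 1) < phi n c d f i j) : ∃ g, Move n c d i g f := by
  obtain ⟨j₀, hj₀, hmax, hlast⟩ := exists_last_isMaxOn (phi n c d f i) (by omega : 0 ≤ i)
  obtain ⟨hj₀0, hj₀i⟩ := mem_Icc.1 hj₀
  have hafter : ∀ q, j₀ < q → q ≤ i + 1 → phi n c d f i q < phi n c d f i j₀ := by
    intro q hq hqi
    rcases hqi.eq_or_lt with rfl | hqi
    · exact hlt.trans_le (hmax j (mem_Icc.2 ⟨hj, hji⟩))
    · exact hlast q (mem_Icc.2 ⟨by omega, by omega⟩) hq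
  have hj₀1 : 1 ≤ j₀ := by
    by_contra! h
    have := hafter 1 (by omega) (by omega)
    rw [show j₀ = 0 by omega, phi_zero_right] at this
    exact (phi_one_nonneg hf).not_gt this
  have hexists : ∃ k ∈ Icc 1 n, 0 < delN n c d f k i j₀ := by
    by_contra! h
    have hsum : delM n c d f i j₀ ≤ 0 := sum_nonpos h
    have := phi_succ_sub (n := n) (c := c) (d := d) (f := f) (i := i) hj₀0
    linarith [hafter (j₀ + 1) (by omega) (by omega), delM_nonneg (i := i - 1) (j := j₀) hf]
  obtain ⟨k₀, ⟨hk₀, hpos⟩, hleast⟩ := Int.exists_least_of_bdd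
    (P := fun k => k ∈ Icc 1 n ∧ 0 < delN n c d f k i j₀)
    ⟨1, fun _ h => (mem_Icc.1 h.1).1⟩ hexists
  obtain ⟨hk₀1, hk₀n⟩ := mem_Icc.1 hk₀
  refine ⟨_, move_lowerAt hf hin hj₀1 hj₀i (fun p hp hpj => hmax p (mem_Icc.2 ⟨hp, by omega⟩))
    hafter hk₀1 hk₀n hpos fun k' hk'1 hk' => ?_⟩
  refine le_antisymm (not_lt.1 fun h => ?_) (delN_nonneg hf hk'1 (by omega))
  exact absurd (hleast k' ⟨mem_Icc.2 ⟨hk'1, by omega⟩, h⟩) (by omega)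

theorem feasible_layerConst {e : ℤ → ℤ} (he : ∀ k, d k ≤ e k ∧ e k ≤ c k) :
    Feasible n c d (fun k _ _ => e k) :=
  ⟨fun k _ _ _ => he k, fun _ _ _ _ _ => le_rfl, fun _ _ _ _ _ => le_rfl,
    fun i j _ _ _ => ⟨i - j + 1, le_rfl, by omega, fun _ _ _ _ => rfl, fun _ _ _ _ => rfl⟩⟩

theorem no_move_to_lower : ¬Move n c d i g (fun k _ _ => d k) := by
  rintro ⟨hg, j, k, ⟨hj, hji, -⟩, ⟨hk, hkn, -⟩, hmove⟩
  have := congrFun (congrFun (congrFun hmove k) i) j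
  simp only [and_self, if_true] at this
  have := (hg.1 k i j (by omega)).1
  omega

theorem delN_upper_sub_one (hk : 1 ≤ k) (hkn : k ≤ n) {a s : ℤ} (hs : 0 ≤ s) (hsa : s < a)
    (han : a ≤ n) :
    delN n c d (fun k _ _ => c k) k (a - 1) s = delN n c d (fun k _ _ => c k) k a s := by
  simp only [delN, extF, sub_add_cancel]
  split_ifs <;> omega

theorem phi_upper (hin : i ≤ n) (hji : j ≤ i) :
    phi n c d (fun k _ _ => c k) i j = 0 := by
  rw [phi_eq_sum]
  refine sum_eq_zero fun s hs => ?_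
  obtain ⟨hs0, hsj⟩ := mem_Icc.1 hs
  rw [delM, delM, ← sum_sub_distrib]
  exact sum_eq_zero fun k hk => sub_eq_zero.2
    (delN_upper_sub_one (mem_Icc.1 hk).1 (mem_Icc.1 hk).2 hs0 (by omega) hin)

theorem no_move_from_upper : ¬Move n c d i (fun k _ _ => c k) g := by
  rintro ⟨-, j, k, ⟨hj, hji, -, -, htEps, -⟩, ⟨hk, hkn, -⟩, -⟩
  refine htEps.ne' (tEps_eq_zero_of_le le_rfl (by omega) ?_)
  rw [phi_upper (by omega) hji, phi_zero_right]

noncomputable def totalWeight (n : ℤ) (f : ℤ → ℤ → ℤ → ℤ) : ℤ :=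
  ∑ k ∈ Icc 1 n, ∑ j ∈ Icc 1 (n - k + 1), ∑ i ∈ Icc j (j + k - 1), f k i j

theorem totalWeight_congr (h : ∀ k i j, IsCNode n k i j → f k i j = g k i j) :
    totalWeight n f = totalWeight n g := by
  refine sum_congr rfl fun k hk => sum_congr rfl fun j hj => sum_congr rfl fun i hi => ?_
  simp only [mem_Icc] at hk hj hi
  exact h k i j (by omega)

theorem totalWeight_layerConst (e : ℤ → ℤ) :
    totalWeight n (fun k _ _ => e k) = ∑ k ∈ Icc 1 n, e k * (k * (n - k + 1)) := by
  refine sum_congr rfl fun k hk => ?_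
  have hk := mem_Icc.1 hk
  have hlayer : ∀ j, ∑ _i ∈ Icc j (j + k - 1), e k = k * e k := fun j => by
    rw [sum_const, Int.card_Icc, nsmul_eq_mul, show j + k - 1 + 1 - j = k by ring,
      Int.toNat_of_nonneg (by omega)]
  rw [sum_congr rfl fun j _ => hlayer j, sum_const, Int.card_Icc, nsmul_eq_mul,
    Int.toNat_of_nonneg (by omega)]
  ring

theorem totalWeight_move (hm : Move n c d i f g) : totalWeight n g = totalWeight n f + 1 := by
  obtain ⟨-, j, k, ⟨hj, hji, -⟩, ⟨hk, hkn, -⟩, rfl⟩ := hm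
  have hval : ∀ k' i' j', (if k' = k ∧ i' = i ∧ j' = j then f k i j + 1 else f k' i' j') =
      f k' i' j' + if k' = k then if j' = j then if i' = i then 1 else 0 else 0 else 0 := by
    intro k' i' j'
    by_cases h : k' = k ∧ i' = i ∧ j' = j
    · obtain ⟨rfl, rfl, rfl⟩ := h
      simp
    · rw [if_neg h]
      split_ifs <;> omega
  simp only [totalWeight, hval, sum_add_distrib, add_right_inj, sum_ite_irrel, sum_const_zero,
    sum_ite_eq', mem_Icc]
  split_ifs <;> omega

theorem totalWeight_path {m : ℕ} {p : ℕ → ℤ → ℤ → ℤ → ℤ}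
    (hstep : ∀ t, t < m → ∃ i, Move n c d i (p t) (p (t + 1))) :
    totalWeight n (p m) = totalWeight n (p 0) + m := by
  induction m with
  | zero => simp
  | succ m ih =>
    obtain ⟨i, hmove⟩ := hstep m (by omega)
    rw [totalWeight_move hmove, ih fun t ht => hstep t (by omega)]
    push_cast
    ring

end CrossingModel

open CrossingModel

theorem stmt7_general (n : ℤ) (c : ℤ → ℤ) (hc : ∀ k, 0 ≤ c k) :
    Feasible n c (fun _ => 0) (fun _ _ _ => 0) ∧
    Feasible n c (fun _ => 0) (fun k _ _ => c k) ∧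
    (∀ i g, ¬ Move n c (fun _ => 0) i g (fun _ _ _ => 0)) ∧
    (∀ f, Feasible n c (fun _ => 0) f → (∀ i g, ¬ Move n c (fun _ => 0) i g f) →
        ∀ k i j, IsCNode n k i j → f k i j = 0) ∧
    (∀ i g, ¬ Move n c (fun _ => 0) i (fun k _ _ => c k) g) ∧
    (∀ f, Feasible n c (fun _ => 0) f → (∀ i g, ¬ Move n c (fun _ => 0) i f g) →
        ∀ k i j, IsCNode n k i j → f k i j = c k) ∧
    (∀ (m : ℕ) (p : ℕ → ℤ → ℤ → ℤ → ℤ),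
        (∀ k i j, IsCNode n k i j → p 0 k i j = 0) →
        (∀ k i j, IsCNode n k i j → p m k i j = c k) →
        (∀ t, t < m → ∃ i, Move n c (fun _ => 0) i (p t) (p (t + 1))) →
        (m : ℤ) = ∑ k ∈ Finset.Icc (1 : ℤ) n, c k * (k * (n - k + 1))) := by
  refine ⟨feasible_layerConst fun k => ⟨le_rfl, hc k⟩, feasible_layerConst fun k => ⟨hc k, le_rfl⟩,
    fun _ _ => no_move_to_lower, ?_, fun _ _ => no_move_from_upper, ?_, ?_⟩
  · intro f hf hsource k i j hnode
    refine eq_lower_of_phi_le hf (fun i' j' hi hin hj hji => not_lt.1 fun hlt => ?_) hnode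
    obtain ⟨g, hmove⟩ := exists_move_to hf hi hin hj hji hlt
    exact hsource i' g hmove
  · intro f hf hsink k i j hnode
    refine eq_upper_of_phi_nonpos hf (fun i' j' hi hin hj hji => not_lt.1 fun hpos => ?_) hnode
    obtain ⟨g, hmove⟩ := exists_move_from hf hi hin hj hji hpos
    exact hsink i' g hmove
  · intro m p h0 hm hstep
    have hlen := totalWeight_path hstep
    rw [totalWeight_congr hm, totalWeight_congr h0, totalWeight_layerConst,
      totalWeight_layerConst (fun _ => 0)] at hlen
    simp only [zero_mul, Finset.sum_const_zero, zero_add] at hlen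
    exact hlen.symm

/-- In the crystal 𝒦(c) generated by the crossing model, the all-zero function
is the unique source, the function with constant value `c k` on each base
subgraph `G^k` is the unique sink, and every directed path from the former to
the latter has length `Σ_{k=1}^n c_k · k(n-k+1)`. -/
theorem stmt7 (n : ℤ) (hn : 1 ≤ n) (c : ℤ → ℤ) (hc : ∀ k, 0 ≤ c k) :
    Feasible n c (fun _ => 0) (fun _ _ _ => 0) ∧
    Feasible n c (fun _ => 0) (fun k _ _ => c k) ∧
    (∀ i g, ¬ Move n c (fun _ => 0) i g (fun _ _ _ => 0)) ∧
    (∀ f, Feasible n c (fun _ => 0) f → (∀ i g, ¬ Move n c (fun _ => 0) i g f) →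
        ∀ k i j, IsCNode n k i j → f k i j = 0) ∧
    (∀ i g, ¬ Move n c (fun _ => 0) i (fun k _ _ => c k) g) ∧
    (∀ f, Feasible n c (fun _ => 0) f → (∀ i g, ¬ Move n c (fun _ => 0) i f g) →
        ∀ k i j, IsCNode n k i j → f k i j = c k) ∧
    (∀ (m : ℕ) (p : ℕ → ℤ → ℤ → ℤ → ℤ),
        (∀ k i j, IsCNode n k i j → p 0 k i j = 0) →
        (∀ k i j, IsCNode n k i j → p m k i j = c k) →
        (∀ t, t < m → ∃ i, Move n c (fun _ => 0) i (p t) (p (t + 1))) →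
        (m : ℤ) = ∑ k ∈ Finset.Icc (1 : ℤ) n, c k * (k * (n - k + 1))) :=
  stmt7_general n c hc
end

section
/- Let ε(1),...,ε(m) and δ(1),...,δ(m) be nonnegative integers (white and black ball counts in boxes 1..m). Then there exists a set C of couples, each pairing a distinct black ball in a box j with a distinct white ball in a box j' > j, such that the associated integer intervals [j, j'] form a laminar (non-crossing) family, no free (uncoupled) black ball lies left of a free white ball, and no free ball lies in the open interior of a maximal coupled interval. Moreover, for each box j, the number of free white balls in box j and the number of free black balls in box j are uniquely determined (they equal the residual slacks ε̃(j) and δ̃(j)). -/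
/-- `π(p,q) = Σ_{r=p+1}^{q} ε(r) − Σ_{r=p}^{q-1} δ(r)`. -/
def piF (ε δ : ℕ → ℤ) (p q : ℕ) : ℤ :=
  (∑ r ∈ Finset.Icc (p + 1) q, ε r) - (∑ r ∈ Finset.Icc p (q - 1), δ r)

/-- Residual upper slack `ε̃(j) = max(0, min_{0 ≤ p < j} π(p,j))`. -/
def tE (ε δ : ℕ → ℤ) (j : ℕ) : ℤ :=
  max 0 ((Finset.Icc 0 (j - 1)).fold min (piF ε δ 0 j) (fun p => piF ε δ p j))

/-- Residual lower slack `δ̃(j) = max(0, min_{j < q ≤ m+1} (−π(j,q)))`. -/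
def tD (ε δ : ℕ → ℤ) (m j : ℕ) : ℤ :=
  max 0 ((Finset.Icc (j + 1) (m + 1)).fold min (-(piF ε δ j (m + 1)))
    (fun q => -(piF ε δ j q)))

/-- An arrangement of couples for the balls-in-boxes data (ε = white counts,
δ = black counts in boxes 1..m): `x j j'` is the number of couples joining a
black ball of box `j` to a white ball of box `j' > j`.  The conditions are:
couples pair distinct balls (capacity), the family of intervals is
non-crossing, no free black ball lies left of a free white ball, and no free
ball lies in the open interior of an interval of the family. -/
def GoodCoupling (m : ℕ) (ε δ : ℕ → ℕ) (x : ℕ → ℕ → ℕ) : Prop :=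
  (∀ j j', x j j' ≠ 0 → 1 ≤ j ∧ j < j' ∧ j' ≤ m) ∧
  (∀ j, ∑ j' ∈ Finset.Icc 1 m, x j j' ≤ δ j) ∧
  (∀ j', ∑ j ∈ Finset.Icc 1 m, x j j' ≤ ε j') ∧
  (∀ a b a' b', x a b ≠ 0 → x a' b' ≠ 0 → a < a' → a' < b → b < b' → False) ∧
  (∀ j j', 1 ≤ j → j < j' → j' ≤ m →
     ¬ (∑ q ∈ Finset.Icc 1 m, x j q < δ j ∧ ∑ p ∈ Finset.Icc 1 m, x p j' < ε j')) ∧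
  (∀ a b, x a b ≠ 0 → ∀ j, a < j → j < b →
     δ j = ∑ q ∈ Finset.Icc 1 m, x j q ∧ ε j = ∑ p ∈ Finset.Icc 1 m, x p j)



open Finset


lemma keySwap (m : ℕ) (y : ℕ → ℕ → ℕ)
    (hy : ∀ r q, y r q ≠ 0 → 1 ≤ r ∧ r ≤ m ∧ 1 ≤ q ∧ q ≤ m)
    (A S : Finset ℕ) (hA : ∀ r ∈ A, ∀ q, y r q ≠ 0 → q ∈ S) :
    ∑ r ∈ A, ∑ q ∈ Icc 1 m, y r q ≤ ∑ q ∈ S, ∑ r ∈ Icc 1 m, y r q := by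
  have h1 : ∑ r ∈ A, ∑ q ∈ Icc 1 m, y r q
      = ∑ r ∈ A, ∑ q ∈ (Icc 1 m).filter (· ∈ S), y r q := by
    refine Finset.sum_congr rfl fun r hr => ?_
    refine (Finset.sum_subset (Finset.filter_subset _ _) ?_).symm
    intro q hq hq2
    by_contra h
    exact hq2 (Finset.mem_filter.mpr ⟨hq, hA r hr q h⟩)
  rw [h1, Finset.sum_comm]
  calc ∑ q ∈ (Icc 1 m).filter (· ∈ S), ∑ r ∈ A, y r q
      ≤ ∑ q ∈ (Icc 1 m).filter (· ∈ S), ∑ r ∈ Icc 1 m, y r q := by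
        refine Finset.sum_le_sum fun q _ => ?_
        have e : ∑ r ∈ A, y r q = ∑ r ∈ A.filter (· ∈ Icc 1 m), y r q := by
          refine (Finset.sum_subset (Finset.filter_subset _ _) ?_).symm
          intro r hr hr2
          by_contra h
          refine hr2 (Finset.mem_filter.mpr ⟨hr, ?_⟩)
          obtain ⟨a1, a2, _, _⟩ := hy r q h
          exact Finset.mem_Icc.mpr ⟨a1, a2⟩
        rw [e]
        exact Finset.sum_le_sum_of_subset fun r hr => (Finset.mem_filter.mp hr).2
    _ ≤ ∑ q ∈ S, ∑ r ∈ Icc 1 m, y r q :=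
        Finset.sum_le_sum_of_subset fun q hq => (Finset.mem_filter.mp hq).2

lemma split_top (f : ℕ → ℕ) (a b : ℕ) (h : a ≤ b) (h1 : 1 ≤ b) :
    ∑ r ∈ Finset.Icc a b, f r = ∑ r ∈ Finset.Icc a (b-1), f r + f b := by
  obtain ⟨c, rfl⟩ : ∃ c, b = c + 1 := ⟨b - 1, by omega⟩
  rw [Finset.sum_Icc_succ_top (by omega)]
  simp

lemma split_bot (f : ℕ → ℕ) (a b : ℕ) (h : a ≤ b) :
    ∑ r ∈ Finset.Icc a b, f r = f a + ∑ r ∈ Finset.Icc (a+1) b, f r := by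
  rw [Finset.Icc_eq_cons_Ioc h, Finset.sum_cons, Finset.Icc_add_one_left_eq_Ioc]

lemma piF_cast (ε δ : ℕ → ℕ) (p q : ℕ) :
    piF (fun r => (ε r : ℤ)) (fun r => (δ r : ℤ)) p q =
      ((∑ r ∈ Finset.Icc (p+1) q, ε r : ℕ) : ℤ) - ((∑ r ∈ Finset.Icc p (q-1), δ r : ℕ) : ℤ) := by
  simp [piF, Nat.cast_sum]


lemma uniqW (m : ℕ) (ε δ : ℕ → ℕ) (hδ0 : δ 0 = 0)
    (x : ℕ → ℕ → ℕ) (hx : GoodCoupling m ε δ x) (j : ℕ) (h1j : 1 ≤ j) (hjm : j ≤ m) :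
    (ε j : ℤ) - ∑ p ∈ Finset.Icc 1 m, (x p j : ℤ) =
      tE (fun r => (ε r : ℤ)) (fun r => (δ r : ℤ)) j := by
  obtain ⟨hx1, hx2, hx3, hx4, hx5, hx6⟩ := hx
  have hy : ∀ r q, x r q ≠ 0 → 1 ≤ r ∧ r ≤ m ∧ 1 ≤ q ∧ q ≤ m := by
    intro r q h; obtain ⟨a1, a2, a3⟩ := hx1 r q h; exact ⟨a1, by omega, by omega, a3⟩
  have hcast : (∑ p ∈ Finset.Icc 1 m, (x p j : ℤ)) = ((∑ p ∈ Finset.Icc 1 m, x p j : ℕ) : ℤ) :=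
    (Nat.cast_sum _ _).symm
  rw [hcast, tE]
  have hUW : ∑ p ∈ Finset.Icc 1 m, x p j < ε j →
      ∀ p, p ≤ j - 1 →
      ∑ r ∈ Finset.Icc p (j-1), δ r
        ≤ ∑ r ∈ Finset.Icc (p+1) (j-1), ε r + ∑ p' ∈ Finset.Icc 1 m, x p' j := by
    intro hfw p _
    have step1 : ∑ r ∈ Finset.Icc p (j-1), δ r
        ≤ ∑ r ∈ Finset.Icc p (j-1), (∑ q ∈ Finset.Icc 1 m, x r q) := by
      refine Finset.sum_le_sum fun r hr => ?_
      rcases Nat.eq_zero_or_pos r with h0 | h0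
      · subst h0; rw [hδ0]; exact Nat.zero_le _
      · have hrj : r < j := by have := (Finset.mem_Icc.mp hr).2; omega
        have h5 := hx5 r j h0 hrj hjm
        by_contra hcon
        push_neg at hcon
        exact h5 ⟨hcon, hfw⟩
    have step2 : ∑ r ∈ Finset.Icc p (j-1), (∑ q ∈ Finset.Icc 1 m, x r q)
        ≤ ∑ q ∈ Finset.Icc (p+1) j, (∑ r ∈ Finset.Icc 1 m, x r q) := by
      refine keySwap m x hy _ _ ?_
      intro r hr q hq
      obtain ⟨h1r, hrq, hqm⟩ := hx1 r q hq
      have hr2 := Finset.mem_Icc.mp hr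
      have hqj : q ≤ j := by
        by_contra hqj
        push_neg at hqj
        have h6 := (hx6 r q hq j (by omega) hqj).2
        omega
      exact Finset.mem_Icc.mpr ⟨by omega, hqj⟩
    have step3 : ∑ q ∈ Finset.Icc (p+1) j, (∑ r ∈ Finset.Icc 1 m, x r q)
        = ∑ q ∈ Finset.Icc (p+1) (j-1), (∑ r ∈ Finset.Icc 1 m, x r q)
          + ∑ r ∈ Finset.Icc 1 m, x r j :=
      split_top _ _ _ (by omega) h1j
    have step4 : ∑ q ∈ Finset.Icc (p+1) (j-1), (∑ r ∈ Finset.Icc 1 m, x r q)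
        ≤ ∑ q ∈ Finset.Icc (p+1) (j-1), ε q :=
      Finset.sum_le_sum fun q _ => hx3 q
    omega
  have hLW : ∃ p, p ≤ j - 1 ∧
      ∑ r ∈ Finset.Icc (p+1) (j-1), ε r + ∑ p' ∈ Finset.Icc 1 m, x p' j
        ≤ ∑ r ∈ Finset.Icc p (j-1), δ r := by
    by_cases hc : ∑ p' ∈ Finset.Icc 1 m, x p' j = 0
    · refine ⟨j - 1, le_refl _, ?_⟩
      rw [hc]
      have he : Finset.Icc (j-1+1) (j-1) = ∅ := by
        apply Finset.Icc_eq_empty; omega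
      rw [he]
      simp
    · have hne : ((Finset.Icc 1 m).filter (fun a => x a j ≠ 0)).Nonempty := by
        by_contra hne
        apply hc
        rw [Finset.not_nonempty_iff_eq_empty] at hne
        refine Finset.sum_eq_zero fun p' hp' => ?_
        by_contra h
        have : p' ∈ (Finset.Icc 1 m).filter (fun a => x a j ≠ 0) :=
          Finset.mem_filter.mpr ⟨hp', h⟩
        rw [hne] at this
        exact absurd this (Finset.notMem_empty _)
      set a' := ((Finset.Icc 1 m).filter (fun a => x a j ≠ 0)).min' hne with ha'
      have ha'mem := Finset.min'_mem _ hne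
      rw [Finset.mem_filter] at ha'mem
      obtain ⟨ha'Icc, ha'x⟩ := ha'mem
      obtain ⟨h1a, haj, _⟩ := hx1 a' j ha'x
      refine ⟨a', by omega, ?_⟩
      have e1 : ∀ r ∈ Finset.Icc (a'+1) (j-1), ε r = ∑ p' ∈ Finset.Icc 1 m, x p' r := by
        intro r hr
        have hr2 := Finset.mem_Icc.mp hr
        exact (hx6 a' j ha'x r (by omega) (by omega)).2
      have e2 : ∑ r ∈ Finset.Icc (a'+1) (j-1), ε r
          = ∑ r ∈ Finset.Icc (a'+1) (j-1), (∑ p' ∈ Finset.Icc 1 m, x p' r) :=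
        Finset.sum_congr rfl e1
      have e3 : ∑ r ∈ Finset.Icc (a'+1) j, (∑ p' ∈ Finset.Icc 1 m, x p' r)
          = ∑ r ∈ Finset.Icc (a'+1) (j-1), (∑ p' ∈ Finset.Icc 1 m, x p' r)
            + ∑ p' ∈ Finset.Icc 1 m, x p' j :=
        split_top _ _ _ (by omega) h1j
      have e4 : ∑ r ∈ Finset.Icc (a'+1) j, (∑ p' ∈ Finset.Icc 1 m, x p' r)
          ≤ ∑ p' ∈ Finset.Icc a' (j-1), (∑ r ∈ Finset.Icc 1 m, x p' r) := by
        refine keySwap m (fun r q => x q r) ?_ _ _ ?_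
        · intro r q h
          obtain ⟨b1, b2, b3⟩ := hx1 q r h
          exact ⟨by omega, b3, b1, by omega⟩
        · intro r hr p' hp'
          have hr2 := Finset.mem_Icc.mp hr
          obtain ⟨h1p, hpr, hrm⟩ := hx1 p' r hp'
          refine Finset.mem_Icc.mpr ⟨?_, by omega⟩
          by_contra hlt
          push_neg at hlt
          rcases Nat.lt_or_ge r j with hrj | hrj
          · exact hx4 p' r a' j hp' ha'x hlt (by omega) hrj
          · have hrj' : r = j := by omega
            subst hrj'
            have : a' ≤ p' := Finset.min'_le _ _
              (Finset.mem_filter.mpr ⟨Finset.mem_Icc.mpr ⟨h1p, by omega⟩, hp'⟩)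
            omega
      have e5 : ∑ p' ∈ Finset.Icc a' (j-1), (∑ r ∈ Finset.Icc 1 m, x p' r)
          ≤ ∑ r ∈ Finset.Icc a' (j-1), δ r :=
        Finset.sum_le_sum fun p' _ => hx2 p'
      omega
  apply le_antisymm
  · rcases Nat.lt_or_ge (∑ p ∈ Finset.Icc 1 m, x p j) (ε j) with hfw | hfw
    · refine le_trans ?_ (le_max_right _ _)
      rw [Finset.le_fold_min]
      constructor
      · rw [piF_cast]
        have h := hUW hfw 0 (by omega)
        have hs : ∑ r ∈ Finset.Icc (0+1) j, ε r
            = ∑ r ∈ Finset.Icc (0+1) (j-1), ε r + ε j := split_top ε _ j (by omega) h1j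
        omega
      · intro p hp
        rw [piF_cast]
        have hp2 := (Finset.mem_Icc.mp hp).2
        have h := hUW hfw p hp2
        have hs : ∑ r ∈ Finset.Icc (p+1) j, ε r
            = ∑ r ∈ Finset.Icc (p+1) (j-1), ε r + ε j := split_top ε _ j (by omega) h1j
        omega
    · have hle := hx3 j
      have he : (ε j : ℤ) - ((∑ p ∈ Finset.Icc 1 m, x p j : ℕ) : ℤ) = 0 := by omega
      rw [he]
      exact le_max_left _ _
  · apply max_le
    · have := hx3 j
      omega
    · obtain ⟨p, hp, hineq⟩ := hLW
      refine le_trans ((Finset.fold_min_le _).mpr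
        (Or.inr ⟨p, Finset.mem_Icc.mpr ⟨Nat.zero_le _, hp⟩, le_refl _⟩)) ?_
      rw [piF_cast]
      have hs : ∑ r ∈ Finset.Icc (p+1) j, ε r
          = ∑ r ∈ Finset.Icc (p+1) (j-1), ε r + ε j := split_top ε _ j (by omega) h1j
      omega

lemma uniqB (m : ℕ) (ε δ : ℕ → ℕ)
    (hout : ∀ r, m < r → ε r = 0 ∧ δ r = 0)
    (x : ℕ → ℕ → ℕ) (hx : GoodCoupling m ε δ x) (j : ℕ) (h1j : 1 ≤ j) (hjm : j ≤ m) :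
    (δ j : ℤ) - ∑ q ∈ Finset.Icc 1 m, (x j q : ℤ) =
      tD (fun r => (ε r : ℤ)) (fun r => (δ r : ℤ)) m j := by
  obtain ⟨hx1, hx2, hx3, hx4, hx5, hx6⟩ := hx
  have hy : ∀ r q, x r q ≠ 0 → 1 ≤ r ∧ r ≤ m ∧ 1 ≤ q ∧ q ≤ m := by
    intro r q h; obtain ⟨a1, a2, a3⟩ := hx1 r q h; exact ⟨a1, by omega, by omega, a3⟩
  have hcast : (∑ q ∈ Finset.Icc 1 m, (x j q : ℤ)) = ((∑ q ∈ Finset.Icc 1 m, x j q : ℕ) : ℤ) :=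
    (Nat.cast_sum _ _).symm
  rw [hcast, tD]
  have hUB : ∑ q ∈ Finset.Icc 1 m, x j q < δ j →
      ∀ q, j + 1 ≤ q → q ≤ m + 1 →
      ∑ r ∈ Finset.Icc (j+1) q, ε r
        ≤ ∑ r ∈ Finset.Icc (j+1) (q-1), δ r + ∑ q' ∈ Finset.Icc 1 m, x j q' := by
    intro hfb q hq1 hq2
    have step1 : ∑ r ∈ Finset.Icc (j+1) q, ε r
        ≤ ∑ r ∈ Finset.Icc (j+1) q, (∑ p ∈ Finset.Icc 1 m, x p r) := by
      refine Finset.sum_le_sum fun r hr => ?_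
      have hr2 := Finset.mem_Icc.mp hr
      rcases Nat.lt_or_ge m r with hm | hm
      · rw [(hout r hm).1]; exact Nat.zero_le _
      · have h5 := hx5 j r h1j (by omega) hm
        by_contra hcon
        push_neg at hcon
        exact h5 ⟨hfb, hcon⟩
    have step2 : ∑ r ∈ Finset.Icc (j+1) q, (∑ p ∈ Finset.Icc 1 m, x p r)
        ≤ ∑ p ∈ Finset.Icc j (q-1), (∑ r ∈ Finset.Icc 1 m, x p r) := by
      refine keySwap m (fun r q' => x q' r) ?_ _ _ ?_
      · intro r q' h
        obtain ⟨b1, b2, b3⟩ := hx1 q' r h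
        exact ⟨by omega, b3, b1, by omega⟩
      · intro r hr p hp
        have hr2 := Finset.mem_Icc.mp hr
        obtain ⟨h1p, hpr, hrm⟩ := hx1 p r hp
        refine Finset.mem_Icc.mpr ⟨?_, by omega⟩
        by_contra hlt
        push_neg at hlt
        have h6 := (hx6 p r hp j hlt (by omega)).1
        omega
    have step3 : ∑ p ∈ Finset.Icc j (q-1), (∑ r ∈ Finset.Icc 1 m, x p r)
        = ∑ r ∈ Finset.Icc 1 m, x j r
          + ∑ p ∈ Finset.Icc (j+1) (q-1), (∑ r ∈ Finset.Icc 1 m, x p r) :=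
      split_bot _ _ _ (by omega)
    have step4 : ∑ p ∈ Finset.Icc (j+1) (q-1), (∑ r ∈ Finset.Icc 1 m, x p r)
        ≤ ∑ p ∈ Finset.Icc (j+1) (q-1), δ p :=
      Finset.sum_le_sum fun p _ => hx2 p
    omega
  have hLB : ∃ q, j + 1 ≤ q ∧ q ≤ m + 1 ∧
      ∑ r ∈ Finset.Icc (j+1) (q-1), δ r + ∑ q' ∈ Finset.Icc 1 m, x j q'
        ≤ ∑ r ∈ Finset.Icc (j+1) q, ε r := by
    by_cases hc : ∑ q' ∈ Finset.Icc 1 m, x j q' = 0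
    · refine ⟨j + 1, le_refl _, by omega, ?_⟩
      rw [hc]
      have he : Finset.Icc (j+1) (j+1-1) = ∅ := by
        apply Finset.Icc_eq_empty; omega
      rw [he]
      simp
    · have hne : ((Finset.Icc 1 m).filter (fun q' => x j q' ≠ 0)).Nonempty := by
        by_contra hne
        apply hc
        rw [Finset.not_nonempty_iff_eq_empty] at hne
        refine Finset.sum_eq_zero fun q' hq' => ?_
        by_contra h
        have : q' ∈ (Finset.Icc 1 m).filter (fun q' => x j q' ≠ 0) :=
          Finset.mem_filter.mpr ⟨hq', h⟩
        rw [hne] at this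
        exact absurd this (Finset.notMem_empty _)
      set b' := ((Finset.Icc 1 m).filter (fun q' => x j q' ≠ 0)).max' hne with hb'
      have hb'mem := Finset.max'_mem _ hne
      rw [Finset.mem_filter] at hb'mem
      obtain ⟨hb'Icc, hb'x⟩ := hb'mem
      obtain ⟨_, hjb, hb'm⟩ := hx1 j b' hb'x
      refine ⟨b', by omega, by omega, ?_⟩
      have e1 : ∀ r ∈ Finset.Icc (j+1) (b'-1), δ r = ∑ q' ∈ Finset.Icc 1 m, x r q' := by
        intro r hr
        have hr2 := Finset.mem_Icc.mp hr
        exact (hx6 j b' hb'x r (by omega) (by omega)).1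
      have e2 : ∑ r ∈ Finset.Icc (j+1) (b'-1), δ r
          = ∑ r ∈ Finset.Icc (j+1) (b'-1), (∑ q' ∈ Finset.Icc 1 m, x r q') :=
        Finset.sum_congr rfl e1
      have e3 : ∑ r ∈ Finset.Icc j (b'-1), (∑ q' ∈ Finset.Icc 1 m, x r q')
          = ∑ q' ∈ Finset.Icc 1 m, x j q'
            + ∑ r ∈ Finset.Icc (j+1) (b'-1), (∑ q' ∈ Finset.Icc 1 m, x r q') :=
        split_bot _ _ _ (by omega)
      have e4 : ∑ r ∈ Finset.Icc j (b'-1), (∑ q' ∈ Finset.Icc 1 m, x r q')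
          ≤ ∑ q' ∈ Finset.Icc (j+1) b', (∑ r ∈ Finset.Icc 1 m, x r q') := by
        refine keySwap m x hy _ _ ?_
        intro r hr q' hq'
        have hr2 := Finset.mem_Icc.mp hr
        obtain ⟨h1r, hrq, hqm⟩ := hx1 r q' hq'
        refine Finset.mem_Icc.mpr ⟨by omega, ?_⟩
        rcases Nat.eq_or_lt_of_le hr2.1 with hrj | hrj
        · have hmem : q' ∈ (Finset.Icc 1 m).filter (fun q'' => x j q'' ≠ 0) := by
            refine Finset.mem_filter.mpr ⟨Finset.mem_Icc.mpr ⟨by omega, hqm⟩, ?_⟩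
            rw [hrj]
            exact hq'
          exact Finset.le_max' _ _ hmem
        · by_contra hgt
          push_neg at hgt
          exact hx4 j b' r q' hb'x hq' hrj (by omega) hgt
      have e5 : ∑ q' ∈ Finset.Icc (j+1) b', (∑ r ∈ Finset.Icc 1 m, x r q')
          ≤ ∑ q' ∈ Finset.Icc (j+1) b', ε q' :=
        Finset.sum_le_sum fun q' _ => hx3 q'
      omega
  apply le_antisymm
  · rcases Nat.lt_or_ge (∑ q ∈ Finset.Icc 1 m, x j q) (δ j) with hfb | hfb
    · refine le_trans ?_ (le_max_right _ _)
      rw [Finset.le_fold_min]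
      constructor
      · rw [piF_cast]
        have h := hUB hfb (m+1) (by omega) (le_refl _)
        have hs : ∑ r ∈ Finset.Icc j (m+1-1), δ r
            = δ j + ∑ r ∈ Finset.Icc (j+1) (m+1-1), δ r := split_bot δ _ _ (by omega)
        omega
      · intro q hq
        rw [piF_cast]
        have hq2 := Finset.mem_Icc.mp hq
        have h := hUB hfb q hq2.1 hq2.2
        have hs : ∑ r ∈ Finset.Icc j (q-1), δ r
            = δ j + ∑ r ∈ Finset.Icc (j+1) (q-1), δ r := split_bot δ _ _ (by omega)
        omega
    · have hle := hx2 j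
      have he : (δ j : ℤ) - ((∑ q ∈ Finset.Icc 1 m, x j q : ℕ) : ℤ) = 0 := by omega
      rw [he]
      exact le_max_left _ _
  · apply max_le
    · have := hx2 j
      omega
    · obtain ⟨q, hq1, hq2, hineq⟩ := hLB
      refine le_trans ((Finset.fold_min_le _).mpr
        (Or.inr ⟨q, Finset.mem_Icc.mpr ⟨hq1, hq2⟩, le_refl _⟩)) ?_
      rw [piF_cast]
      have hs : ∑ r ∈ Finset.Icc j (q-1), δ r
          = δ j + ∑ r ∈ Finset.Icc (j+1) (q-1), δ r := split_bot δ _ _ (by omega)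
      omega

lemma zero_good (m : ℕ) (ε δ : ℕ → ℕ)
    (H : ¬ ∃ b, (1 ≤ b ∧ b ≤ m) ∧ ε b ≠ 0 ∧ ∃ a, (1 ≤ a ∧ a ≤ m) ∧ a < b ∧ δ a ≠ 0) :
    GoodCoupling m ε δ (fun _ _ => 0) := by
  refine ⟨?_, ?_, ?_, ?_, ?_, ?_⟩
  · intro j j' h; exact absurd rfl h
  · intro j; simp
  · intro j'; simp
  · intro a b a' b' h; exact absurd rfl h
  · intro j j' h1 h2 h3 ⟨hb, hw⟩
    simp only [Finset.sum_const_zero] at hb hw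
    exact H ⟨j', ⟨by omega, h3⟩, by omega, j, ⟨h1, by omega⟩, h2, by omega⟩
  · intro a b h; exact absurd rfl h

lemma exists_good (m n : ℕ) : ∀ (ε δ : ℕ → ℕ),
    (∑ r ∈ Finset.Icc 1 m, (ε r + δ r)) ≤ n → ∃ x, GoodCoupling m ε δ x := by
  classical
  induction n with
  | zero =>
    intro ε δ htot
    refine ⟨_, zero_good m ε δ ?_⟩
    rintro ⟨b, ⟨h1b, hbm⟩, hεb, -⟩
    have : ε b + δ b ≤ ∑ r ∈ Finset.Icc 1 m, (ε r + δ r) :=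
      Finset.single_le_sum (f := fun r => ε r + δ r) (fun i _ => Nat.zero_le _)
        (Finset.mem_Icc.mpr ⟨h1b, hbm⟩)
    omega
  | succ n ih =>
    intro ε δ htot
    by_cases H : ∃ bb, (1 ≤ bb ∧ bb ≤ m) ∧ ε bb ≠ 0 ∧
        ∃ a, (1 ≤ a ∧ a ≤ m) ∧ a < bb ∧ δ a ≠ 0
    · obtain ⟨b, hPb, bmin⟩ : ∃ bb, ((1 ≤ bb ∧ bb ≤ m) ∧ ε bb ≠ 0 ∧
          ∃ a, (1 ≤ a ∧ a ≤ m) ∧ a < bb ∧ δ a ≠ 0) ∧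
          ∀ q, q < bb → ¬ ((1 ≤ q ∧ q ≤ m) ∧ ε q ≠ 0 ∧
            ∃ a, (1 ≤ a ∧ a ≤ m) ∧ a < q ∧ δ a ≠ 0) :=
        ⟨Nat.find H, Nat.find_spec H, fun q hq => Nat.find_min H hq⟩
      obtain ⟨⟨h1b, hbm⟩, hεb, a0, ⟨h1a0, ha0m⟩, ha0b, hδa0⟩ := hPb
      obtain ⟨a, hδa, ha0le, hale, Fgr⟩ : ∃ aa, δ aa ≠ 0 ∧ a0 ≤ aa ∧ aa ≤ b - 1 ∧
          ∀ r, aa < r → r ≤ b - 1 → δ r = 0 := by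
        refine ⟨Nat.findGreatest (fun aa => δ aa ≠ 0) (b-1),
          Nat.findGreatest_spec (P := fun aa => δ aa ≠ 0) (show a0 ≤ b - 1 by omega) hδa0,
          Nat.le_findGreatest (by omega) hδa0,
          Nat.findGreatest_le _,
          fun r hr1 hr2 => ?_⟩
        by_contra h
        exact Nat.findGreatest_is_greatest (P := fun aa => δ aa ≠ 0) hr1 hr2 h
      have h1a : 1 ≤ a := by omega
      have hab : a < b := by omega
      have ham : a ≤ m := by omega
      have hbIcc : b ∈ Finset.Icc 1 m := Finset.mem_Icc.mpr ⟨h1b, hbm⟩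
      have haIcc : a ∈ Finset.Icc 1 m := Finset.mem_Icc.mpr ⟨h1a, ham⟩
      have hεb1 : 1 ≤ ε b := Nat.one_le_iff_ne_zero.mpr hεb
      have hδa1 : 1 ≤ δ a := Nat.one_le_iff_ne_zero.mpr hδa
      set ε' := Function.update ε b (ε b - 1) with hε'def
      set δ' := Function.update δ a (δ a - 1) with hδ'def
      have hε'b : ε' b = ε b - 1 := Function.update_self _ _ _
      have hδ'a : δ' a = δ a - 1 := Function.update_self _ _ _
      have hε'ne : ∀ r, r ≠ b → ε' r = ε r := fun r hr => Function.update_of_ne hr _ _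
      have hδ'ne : ∀ r, r ≠ a → δ' r = δ r := fun r hr => Function.update_of_ne hr _ _
      have hδ'le : ∀ p, δ' p ≤ δ p := by
        intro p
        rcases eq_or_ne p a with rfl | h
        · rw [hδ'a]; omega
        · rw [hδ'ne _ h]
      have hε'le : ∀ p, ε' p ≤ ε p := by
        intro p
        rcases eq_or_ne p b with rfl | h
        · rw [hε'b]; omega
        · rw [hε'ne _ h]
      have F1 : ∀ r, a < r → r < b → δ r = 0 := by
        intro r hr1 hr2
        exact Fgr r hr1 (by omega)
      have F2 : ∀ r, a < r → r < b → ε r = 0 := by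
        intro r hr1 hr2
        by_contra h
        exact bmin r hr2 ⟨⟨by omega, by omega⟩, h, a, ⟨h1a, ham⟩, hr1, hδa⟩
      have htot' : ∑ r ∈ Finset.Icc 1 m, (ε' r + δ' r) ≤ n := by
        have hlt : ∑ r ∈ Finset.Icc 1 m, (ε' r + δ' r)
            < ∑ r ∈ Finset.Icc 1 m, (ε r + δ r) := by
          refine Finset.sum_lt_sum (fun i _ => ?_) ⟨b, hbIcc, ?_⟩
          · have := hδ'le i
            have := hε'le i
            omega
          · rw [hε'b, hδ'ne b (by omega)]; omega
        omega
      obtain ⟨x', hx'⟩ := ih ε' δ' htot'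
      obtain ⟨h1, h2, h3, h4, h5, h6⟩ := hx'
      have F4 : ∀ p q, x' p q ≠ 0 → δ p ≠ 0 ∧ ε q ≠ 0 := by
        intro p q hpq
        obtain ⟨hp1, hpq', hqm⟩ := h1 p q hpq
        have hone : x' p q ≤ ∑ q' ∈ Finset.Icc 1 m, x' p q' :=
          Finset.single_le_sum (f := fun q' => x' p q') (fun i _ => Nat.zero_le _)
            (Finset.mem_Icc.mpr ⟨by omega, hqm⟩)
        have hone2 : x' p q ≤ ∑ p' ∈ Finset.Icc 1 m, x' p' q :=
          Finset.single_le_sum (f := fun p' => x' p' q) (fun i _ => Nat.zero_le _)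
            (Finset.mem_Icc.mpr ⟨hp1, by omega⟩)
        have hd := h2 p
        have hw := h3 q
        have hdl := hδ'le p
        have hwl := hε'le q
        exact ⟨by omega, by omega⟩
      have F3 : ∀ p q, x' p q ≠ 0 → b ≤ q := by
        intro p q hpq
        obtain ⟨hp1, hpq', hqm⟩ := h1 p q hpq
        obtain ⟨hδp, hεq⟩ := F4 p q hpq
        by_contra hqb
        push_neg at hqb
        exact bmin q hqb ⟨⟨by omega, hqm⟩, hεq, p, ⟨hp1, by omega⟩, hpq', hδp⟩
      have hchar : ∀ p q, (x' p q + if p = a ∧ q = b then 1 else 0) ≠ 0 →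
          x' p q ≠ 0 ∨ (p = a ∧ q = b) := by
        intro p q h
        by_cases h1' : p = a ∧ q = b
        · exact Or.inr h1'
        · rw [if_neg h1'] at h
          exact Or.inl (by omega)
      have hsa : ∀ jj, ∑ q ∈ Finset.Icc 1 m, (x' jj q + if jj = a ∧ q = b then 1 else 0)
          = ∑ q ∈ Finset.Icc 1 m, x' jj q + (if jj = a then 1 else 0) := by
        intro jj
        rw [Finset.sum_add_distrib]
        congr 1
        by_cases h : jj = a
        · simp only [h, true_and]
          rw [Finset.sum_ite_eq' (Finset.Icc 1 m) b (fun _ => (1:ℕ))]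
          simp [hbIcc]
        · simp [h]
      have hsb : ∀ jj, ∑ p ∈ Finset.Icc 1 m, (x' p jj + if p = a ∧ jj = b then 1 else 0)
          = ∑ p ∈ Finset.Icc 1 m, x' p jj + (if jj = b then 1 else 0) := by
        intro jj
        rw [Finset.sum_add_distrib]
        congr 1
        by_cases h : jj = b
        · simp only [h, and_true]
          rw [Finset.sum_ite_eq' (Finset.Icc 1 m) a (fun _ => (1:ℕ))]
          simp [haIcc]
        · simp [h]
      refine ⟨fun p q => x' p q + (if p = a ∧ q = b then 1 else 0), ?_, ?_, ?_, ?_, ?_, ?_⟩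
      · intro p q h
        rcases hchar p q h with h' | ⟨rfl, rfl⟩
        · exact h1 p q h'
        · exact ⟨h1a, hab, hbm⟩
      · intro jj
        rw [hsa jj]
        rcases eq_or_ne jj a with rfl | h
        · rw [if_pos rfl]
          have := h2 jj
          omega
        · rw [if_neg h]
          have := h2 jj
          have := hδ'ne jj h
          omega
      · intro jj
        rw [hsb jj]
        rcases eq_or_ne jj b with rfl | h
        · rw [if_pos rfl]
          have := h3 jj
          omega
        · rw [if_neg h]
          have := h3 jj
          have := hε'ne jj h
          omega
      · intro α β α' β' hαβ hα'β' o1 o2 o3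
        rcases hchar _ _ hαβ with hA | ⟨rfl, rfl⟩
        · rcases hchar _ _ hα'β' with hB | ⟨rfl, rfl⟩
          · exact h4 _ _ _ _ hA hB o1 o2 o3
          · have := F3 _ _ hA
            omega
        · rcases hchar _ _ hα'β' with hB | ⟨h5a, h5b⟩
          · have hd := (F4 _ _ hB).1
            have h0 := F1 α' o1 o2
            omega
          · omega
      · intro jj jj' hj1 hjj hjm' hcon
        obtain ⟨hb1, hb2⟩ := hcon
        rw [hsa jj] at hb1
        rw [hsb jj'] at hb2
        refine h5 jj jj' hj1 hjj hjm' ⟨?_, ?_⟩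
        · rcases eq_or_ne jj a with rfl | h
          · rw [if_pos rfl] at hb1
            omega
          · rw [if_neg h] at hb1
            have := hδ'ne jj h
            omega
        · rcases eq_or_ne jj' b with rfl | h
          · rw [if_pos rfl] at hb2
            omega
          · rw [if_neg h] at hb2
            have := hε'ne jj' h
            omega
      · intro α β hαβ jj ho1 ho2
        rcases hchar _ _ hαβ with hA | ⟨rfl, rfl⟩
        · obtain ⟨e1, e2⟩ := h6 α β hA jj ho1 ho2
          constructor
          · rw [hsa jj]
            rcases eq_or_ne jj a with rfl | h
            · rw [if_pos rfl]
              omega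
            · rw [if_neg h]
              have := hδ'ne jj h
              omega
          · rw [hsb jj]
            rcases eq_or_ne jj b with rfl | h
            · rw [if_pos rfl]
              omega
            · rw [if_neg h]
              have := hε'ne jj h
              omega
        · constructor
          · rw [hsa jj, if_neg (show ¬ jj = α by omega)]
            have h0 : δ jj = 0 := F1 jj ho1 ho2
            have hle := h2 jj
            have := hδ'ne jj (show jj ≠ α by omega)
            omega
          · rw [hsb jj, if_neg (show ¬ jj = β by omega)]
            have h0 : ε jj = 0 := F2 jj ho1 ho2
            have hle := h3 jj
            have := hε'ne jj (show jj ≠ β by omega)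
            omega
    · exact ⟨_, zero_good m ε δ H⟩

/-- An arrangement exists, and in every arrangement the numbers of free white
and free black balls in each box are uniquely determined: they equal the
residual slacks ε̃(j), δ̃(j). -/
theorem stmt10 (m : ℕ) (ε δ : ℕ → ℕ)
    (hε0 : ε 0 = 0) (hδ0 : δ 0 = 0)
    (hout : ∀ r, m < r → ε r = 0 ∧ δ r = 0) :
    (∃ x : ℕ → ℕ → ℕ, GoodCoupling m ε δ x) ∧
    (∀ x : ℕ → ℕ → ℕ, GoodCoupling m ε δ x → ∀ j, 1 ≤ j → j ≤ m →
      ((ε j : ℤ) - ∑ p ∈ Finset.Icc 1 m, (x p j : ℤ) =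
        tE (fun r => (ε r : ℤ)) (fun r => (δ r : ℤ)) j) ∧
      ((δ j : ℤ) - ∑ q ∈ Finset.Icc 1 m, (x j q : ℤ) =
        tD (fun r => (ε r : ℤ)) (fun r => (δ r : ℤ)) m j)) := by
  
  constructor
  · exact exists_good m (∑ r ∈ Finset.Icc 1 m, (ε r + δ r)) ε δ le_rfl
  · intro x hx j h1 h2
    exact ⟨uniqW m ε δ hδ0 x hx j h1 h2, uniqB m ε δ hout x hx j h1 h2⟩
end

section
/- Let n ≥ 2 and c ∈ ℤ≥0ⁿ with c_i = 0 for some i ∈ {1,...,n}. Then the map a ↦ q defined by q_j = c_j − a_j + a_{j+1} (j = 1,...,n−1) is injective on the set { a ∈ ℤⁿ : 0 ≤ a ≤ c }. -/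
/-- If some coordinate of c is zero, then the map a ↦ q with
q_j = c_j − a_j + a_{j+1} is injective on { a : 0 ≤ a ≤ c }. -/
theorem stmt14 (n : ℕ) (hn : 2 ≤ n) (c : ℕ → ℤ)
    (hc : ∀ i, 1 ≤ i → i ≤ n → 0 ≤ c i)
    (hzero : ∃ i, 1 ≤ i ∧ i ≤ n ∧ c i = 0)
    (a b : ℕ → ℤ)
    (ha : ∀ i, 1 ≤ i → i ≤ n → 0 ≤ a i ∧ a i ≤ c i)
    (hb : ∀ i, 1 ≤ i → i ≤ n → 0 ≤ b i ∧ b i ≤ c i)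
    (heq : ∀ j, 1 ≤ j → j ≤ n - 1 →
      c j - a j + a (j + 1) = c j - b j + b (j + 1)) :
    ∀ i, 1 ≤ i → i ≤ n → a i = b i := by
  have key : ∀ k, 1 ≤ k → k ≤ n → a k - b k = a 1 - b 1 := by
    intro k
    induction k with
    | zero => intro h; omega
    | succ m ih =>
      intro h1 h2
      rcases Nat.eq_or_lt_of_le h1 with h | h
      · simp [← h]
      · have hm1 : 1 ≤ m := by omega
        have hmn : m ≤ n - 1 := by omega
        have := heq m hm1 hmn
        have := ih hm1 (by omega)
        omega
  obtain ⟨i₀, hi1, hi2, hi0⟩ := hzero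
  have haz : a i₀ = 0 := by have := ha i₀ hi1 hi2; omega
  have hbz : b i₀ = 0 := by have := hb i₀ hi1 hi2; omega
  have h10 : a 1 - b 1 = 0 := by
    have := key i₀ hi1 hi2; omega
  intro i h1 h2
  have := key i h1 h2
  omega
end
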